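/- arXiv:1205.0522 — 3 statements merged into one kernel-verified Lean document; each statement's English description precedes it below -/
import Mathlib

section
/- Let M be obtained from a binary matroid N by relaxing a circuit-hyperplane X, and suppose M has a minor isomorphic to the rank-k whirl W^k for some k ≥ 3. Then in every W^k-minor of M, every rim element lies in X and no spoke element lies in X. -/
set_option autoImplicit false

open Set

universe u v

namespace NearlyBinary

variable {α : Type u} {β : Type v}

/-- `C` is a circuit of `M`: a minimal dependent set. -/
def Circuit (M : Matroid α) (C : Set α) : Prop :=
  M.Dep C ∧ ∀ e ∈ C, M.Indep (C \ {e})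

/-- `H` is a hyperplane of `M`: a maximal proper flat. -/
def Hyperplane (M : Matroid α) (H : Set α) : Prop :=
  M.IsFlat H ∧ H ≠ M.E ∧ ∀ F, M.IsFlat F → H ⊂ F → F = M.E

/-- `H` is a circuit-hyperplane of `M`. -/
def CircuitHyperplane (M : Matroid α) (H : Set α) : Prop :=
  Circuit M H ∧ Hyperplane M H

/-- `M'` is the relaxation of `M` along `H` : same ground set, and the bases of `M'`
are the bases of `M` together with `H`. -/
def IsRelaxation (M : Matroid α) (H : Set α) (M' : Matroid α) : Prop :=
  M'.E = M.E ∧ ∀ B, M'.IsBase B ↔ (M.IsBase B ∨ B = H)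

/-- Deletion of the set `D` from `M`. -/
def del (M : Matroid α) (D : Set α) : Matroid α := M.restrict (M.E \ D)

/-- Contraction of the set `C` in `M`. -/
def con (M : Matroid α) (C : Set α) : Matroid α := ((M✶).restrict (M.E \ C))✶

/-- `N` is a minor of `M` (on the same type), obtained by a contraction and a deletion. -/
def IsMinorOf (N M : Matroid α) : Prop :=
  ∃ C D, C ⊆ M.E ∧ D ⊆ M.E ∧ Disjoint C D ∧ N = del (con M C) D

/-- `M` is binary: representable over `GF(2)`. -/
def IsBinary (M : Matroid α) : Prop :=
  ∃ (ι : Type u) (φ : α → ι → ZMod 2),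
    ∀ I, I ⊆ M.E → (M.Indep I ↔ LinearIndependent (ZMod 2) (fun x : I => φ x.1))

def IsLoop (M : Matroid α) (e : α) : Prop := e ∈ M.E ∧ ¬ M.Indep {e}

def IsColoop (M : Matroid α) (e : α) : Prop := e ∈ M.E ∧ ∀ B, M.IsBase B → e ∈ B

/-- `x` and `y` are parallel: distinct elements forming a two-element circuit. -/
def Parallel (M : Matroid α) (x y : α) : Prop := x ≠ y ∧ Circuit M {x, y}

/-- A separator of `M`: a set such that every circuit lies inside it or inside its complement. -/
def Separator (M : Matroid α) (S : Set α) : Prop :=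
  S ⊆ M.E ∧ ∀ C, Circuit M C → C ⊆ S ∨ C ⊆ M.E \ S

/-- `M` is disconnected: its ground set is partitioned into two nonempty separators. -/
def Disconnected (M : Matroid α) : Prop :=
  ∃ S, Separator M S ∧ S.Nonempty ∧ (M.E \ S).Nonempty

/-- `M` is connected (2-connected). -/
def Connected (M : Matroid α) : Prop := ¬ Disconnected M

/-- The rank (in `ℕ∞`) of a set `X` in `M`. -/
noncomputable def eRk (M : Matroid α) (X : Set α) : ℕ∞ :=
  ⨆ I ∈ {I | M.Indep I ∧ I ⊆ X}, I.encard

/-- `M` has a (Tutte) `k`-separation. -/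
def HasSep (M : Matroid α) (k : ℕ) : Prop :=
  ∃ X, X ⊆ M.E ∧ (k : ℕ∞) ≤ X.encard ∧ (k : ℕ∞) ≤ (M.E \ X).encard ∧
    eRk M X + eRk M (M.E \ X) ≤ eRk M M.E + ((k : ℕ∞) - 1)

/-- `M` is `n`-connected in the sense of Tutte. -/
def TutteConnected (n : ℕ) (M : Matroid α) : Prop :=
  ∀ k, 1 ≤ k → k < n → ¬ HasSep M k

/-- `M` is isomorphic to the uniform matroid `U_{r,m}`. -/
def IsUniform (M : Matroid α) (r m : ℕ) : Prop :=
  M.E.encard = m ∧ ∀ B, M.IsBase B ↔ (B ⊆ M.E ∧ B.encard = r)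

/-- `M` is isomorphic to the direct sum `U_{n-1,n} ⊕ U_{1,k}`. -/
def IsUnifSumUnif (M : Matroid α) (n k : ℕ) : Prop :=
  ∃ S P : Set α, Disjoint S P ∧ S ∪ P = M.E ∧ S.encard = n ∧ P.encard = k ∧
    ∀ B, M.IsBase B ↔ ∃ s ∈ S, ∃ p ∈ P, B = (S \ {s}) ∪ {p}

/-- `M` is the 2-sum of `M₁` and `M₂` with basepoint `p`, described by its circuits. -/
def IsTwoSum (M₁ M₂ : Matroid α) (p : α) (M : Matroid α) : Prop :=
  M₁.E ∩ M₂.E = {p} ∧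
  ¬ IsLoop M₁ p ∧ ¬ IsColoop M₁ p ∧ ¬ IsLoop M₂ p ∧ ¬ IsColoop M₂ p ∧
  M.E = (M₁.E ∪ M₂.E) \ {p} ∧
  ∀ C, Circuit M C ↔
    ((Circuit M₁ C ∧ p ∉ C) ∨ (Circuit M₂ C ∧ p ∉ C) ∨
      ∃ C₁ C₂, Circuit M₁ C₁ ∧ Circuit M₂ C₂ ∧ p ∈ C₁ ∧ p ∈ C₂ ∧
        C = (C₁ \ {p}) ∪ (C₂ \ {p}))

/-- `M` is isomorphic to `N`. -/
def Iso (M : Matroid β) (N : Matroid α) : Prop :=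
  ∃ f : β → α, Set.BijOn f M.E N.E ∧ ∀ I, I ⊆ M.E → (M.Indep I ↔ N.Indep (f '' I))

/-- `M` is the vector matroid, with ground set `G`, of the vectors `φ` over `GF(2)`. -/
def IsVecMatroid {ι : Type v} (M : Matroid α) (φ : α → ι → ZMod 2) (G : Set α) : Prop :=
  M.E = G ∧ ∀ I, I ⊆ G → (M.Indep I ↔ LinearIndependent (ZMod 2) (fun x : I => φ x.1))


/-- The standard binary representation of the rank-`k` wheel: the spokes `Sum.inl i` are
the standard basis vectors, and the rim elements `Sum.inr i` are the sums of two
cyclically consecutive basis vectors. -/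
def wheelRep (k : ℕ) : (Fin k ⊕ Fin k) → Fin k → ZMod 2 :=
  Sum.elim (fun i => Pi.single i 1)
    (fun i => Pi.single i 1 + Pi.single (⟨(i.val + 1) % k, Nat.mod_lt _ i.pos⟩ : Fin k) 1)

/-- `W` is (a copy of) the rank-`k` whirl `𝒲^k`, obtained from the cycle matroid of the
`k`-spoked wheel by relaxing its rim. -/
def IsWhirl (k : ℕ) (W : Matroid (Fin k ⊕ Fin k)) : Prop :=
  ∃ Wh : Matroid (Fin k ⊕ Fin k),
    IsVecMatroid Wh (wheelRep k) Set.univ ∧ IsRelaxation Wh (Set.range Sum.inr) W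


section Aux

variable {α : Type u} {V : Type*} [AddCommGroup V] [Module (ZMod 2) V]

lemma zmod2_cases : ∀ r : ZMod 2, r = 0 ∨ r = 1 := by decide

lemma addself (x : V) : x + x = 0 := by
  have h2 : ((2 : ZMod 2)) = 0 := by decide
  calc x + x = (2 : ZMod 2) • x := (two_smul _ x).symm
  _ = 0 := by rw [h2, zero_smul]

lemma eq_of_addzero {x y : V} (h : x + y = 0) : x = y :=
  add_right_cancel (h.trans (addself y).symm)

/-- subset-sum characterisation of linear independence over `GF(2)`. -/
lemma linindep_iff_sum (φ : α → V) (A : Set α) :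
    LinearIndependent (ZMod 2) (fun x : A => φ x.1) ↔
      ∀ s : Finset α, ↑s ⊆ A → ∑ x ∈ s, φ x = 0 → s = ∅ := by
  classical
  rw [show (fun x : A => φ x.1) = (φ ∘ (Subtype.val : A → α)) from rfl,
    linearIndependent_comp_subtype_iff, linearIndepOn_iff]
  constructor
  · intro h s hsA hsum
    set l : α →₀ ZMod 2 := ⟨s, fun a => if a ∈ s then 1 else 0, by
      intro a
      constructor
      · intro ha; simp [ha]
      · intro ha; by_contra hc; simp [hc] at ha⟩ with hldef
    have hlapp : ∀ a, l a = if a ∈ s then 1 else 0 := fun a => rfl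
    have hlsupp : l.support = s := rfl
    have hsupp : l ∈ Finsupp.supported (ZMod 2) (ZMod 2) A := by
      rw [Finsupp.mem_supported, hlsupp]; exact hsA
    have htot : Finsupp.linearCombination (ZMod 2) φ l = 0 := by
      rw [Finsupp.linearCombination_apply, Finsupp.sum, hlsupp]
      rw [Finset.sum_congr rfl (fun a ha => by rw [hlapp a, if_pos ha, one_smul])]
      exact hsum
    have hl0 := h l hsupp htot
    rw [← hlsupp, hl0]; rfl
  · intro h l hl htot
    have hs : l.support = ∅ := by
      refine h l.support (by rwa [Finsupp.mem_supported] at hl) ?_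
      rw [Finsupp.linearCombination_apply, Finsupp.sum] at htot
      rw [← htot]
      refine (Finset.sum_congr rfl fun a ha => ?_).symm
      rcases zmod2_cases (l a) with h0 | h1
      · exact absurd h0 (Finsupp.mem_support_iff.mp ha)
      · rw [h1, one_smul]
    exact Finsupp.support_eq_empty.mp hs

/-- membership in the `GF(2)`-span of an image is witnessed by a subset sum. -/
lemma mem_span_iff_sum (φ : α → V) (J : Set α) (x : V) :
    x ∈ Submodule.span (ZMod 2) (φ '' J) ↔ ∃ t : Finset α, ↑t ⊆ J ∧ ∑ y ∈ t, φ y = x := by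
  classical
  constructor
  · intro hx
    induction hx using Submodule.span_induction with
    | mem v hv =>
      obtain ⟨j, hj, rfl⟩ := hv
      exact ⟨{j}, by simpa using hj, by simp⟩
    | zero => exact ⟨∅, by simp, by simp⟩
    | add v w _ _ ihv ihw =>
      obtain ⟨t, htJ, rfl⟩ := ihv
      obtain ⟨t', ht'J, rfl⟩ := ihw
      refine ⟨(t ∪ t') \ (t ∩ t'), ?_, ?_⟩
      · refine subset_trans ?_ (Set.union_subset htJ ht'J)
        intro a ha
        simp only [Finset.coe_sdiff, Set.mem_diff, Finset.coe_union, Set.mem_union] at ha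
        exact ha.1
      · have h1 : ∑ y ∈ (t ∪ t') \ (t ∩ t'), φ y + ∑ y ∈ t ∩ t', φ y = ∑ y ∈ t ∪ t', φ y :=
          Finset.sum_sdiff (Finset.inter_subset_union)
        have h2 : ∑ y ∈ t ∪ t', φ y + ∑ y ∈ t ∩ t', φ y = ∑ y ∈ t, φ y + ∑ y ∈ t', φ y :=
          Finset.sum_union_inter
        have h3 : ∑ y ∈ (t ∪ t') \ (t ∩ t'), φ y + (∑ y ∈ t ∩ t', φ y + ∑ y ∈ t ∩ t', φ y)
            = ∑ y ∈ t, φ y + ∑ y ∈ t', φ y := by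
          rw [← add_assoc, h1, h2]
        rwa [addself, add_zero] at h3
    | smul r v _ ihv =>
      obtain ⟨t, htJ, rfl⟩ := ihv
      rcases zmod2_cases r with h0 | h1
      · exact ⟨∅, by simp, by simp [h0]⟩
      · exact ⟨t, htJ, by simp [h1]⟩
  · rintro ⟨t, htJ, rfl⟩
    exact Submodule.sum_mem _ fun y hy => Submodule.subset_span ⟨y, htJ hy, rfl⟩


@[simp] lemma del_ground (M : Matroid α) (D : Set α) : (del M D).E = M.E \ D := rfl
@[simp] lemma con_ground (M : Matroid α) (C : Set α) : (con M C).E = M.E \ C := rfl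

lemma del_indep_iff {M : Matroid α} {D I : Set α} :
    (del M D).Indep I ↔ M.Indep I ∧ I ⊆ M.E \ D := Matroid.restrict_indep_iff

/-- key characterisation of independence in a contraction. -/
lemma con_indep_iff {M : Matroid α} {C I : Set α} (hC : C ⊆ M.E) :
    (con M C).Indep I ↔ I ⊆ M.E \ C ∧ ∃ J, M.IsBasis J C ∧ M.Indep (I ∪ J) := by
  have hA : M.E \ C ⊆ M✶.E := diff_subset
  rw [con, Matroid.dual_indep_iff_exists']
  simp only [Matroid.restrict_ground_eq]
  constructor
  · rintro ⟨hIA, B₁, hB₁, hdj⟩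
    rw [Matroid.isBase_restrict_iff hA] at hB₁
    obtain ⟨B₂, hB₂, hB₁B₂⟩ := hB₁.indep.exists_isBase_superset
    have hB₂A : B₂ ∩ (M.E \ C) = B₁ :=
      (hB₁.eq_of_subset_indep (hB₂.indep.inter_right _)
        (subset_inter hB₁B₂ hB₁.subset) inter_subset_right).symm
    have hbasisC : M.IsBasis ((M.E \ B₂) ∩ C) C := by
      have h := hB₂.compl_inter_isBasis_of_inter_isBasis (X := M.E \ C) (hB₂A ▸ hB₁)
      rw [Matroid.dual_dual, Matroid.dual_ground, diff_diff_cancel_left hC] at h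
      exact h
    refine ⟨hIA, (M.E \ B₂) ∩ C, hbasisC, ?_⟩
    have hIB : I ⊆ M.E \ B₂ := by
      rw [subset_diff]
      refine ⟨hIA.trans diff_subset, ?_⟩
      rw [disjoint_iff_inter_eq_empty]
      have : I ∩ B₂ ⊆ I ∩ B₁ := by
        rw [← hB₂A]
        exact fun x hx => ⟨hx.1, hx.2, (hIA hx.1)⟩
      rw [disjoint_iff_inter_eq_empty] at hdj
      exact subset_empty_iff.mp (hdj ▸ this)
    exact (hB₂.compl_isBase_of_dual.indep).subset (union_subset hIB inter_subset_left)
  · rintro ⟨hIA, J, hJ, hIJ⟩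
    obtain ⟨B, hB, hIJB⟩ := hIJ.exists_isBase_superset
    have hBC : B ∩ C = J :=
      (hJ.eq_of_subset_indep (hB.indep.inter_right _)
        (subset_inter (subset_trans subset_union_right hIJB) hJ.subset)
        inter_subset_right).symm
    have h := hB.compl_inter_isBasis_of_inter_isBasis (X := C) (hBC ▸ hJ)
    refine ⟨hIA, (M.E \ B) ∩ (M.E \ C), (Matroid.isBase_restrict_iff hA).mpr h, ?_⟩
    refine Set.disjoint_left.mpr fun x hxI hx => hx.1.2 ?_
    exact hIJB (subset_union_left hxI)

lemma con_con (M : Matroid α) (C C' : Set α) : con (con M C) C' = con M (C ∪ C') := by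
  unfold con
  rw [Matroid.dual_dual]
  congr 1
  have h1 : (M✶.restrict (M.E \ C))✶.E \ C' = (M.E \ C) \ C' := rfl
  rw [h1, diff_diff, Matroid.restrict_restrict_eq _ (diff_subset_diff_right subset_union_left)]

lemma del_del (M : Matroid α) (D D' : Set α) : del (del M D) D' = del M (D ∪ D') := by
  unfold del
  have h1 : (M.restrict (M.E \ D)).E \ D' = (M.E \ D) \ D' := rfl
  rw [h1, diff_diff, Matroid.restrict_restrict_eq _ (diff_subset_diff_right subset_union_left)]

lemma basis_del_iff {M : Matroid α} {D J C : Set α} (hCD : C ⊆ M.E \ D) :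
    (del M D).IsBasis J C ↔ M.IsBasis J C := by
  rw [del, Matroid.isBasis_restrict_iff diff_subset, and_iff_left hCD]

lemma del_con_comm {M : Matroid α} {C D : Set α} (hC : C ⊆ M.E) (hD : D ⊆ M.E)
    (hCD : Disjoint C D) : del (con M C) D = con (del M D) C := by
  have hCE : C ⊆ (del M D).E := subset_diff.mpr ⟨hC, hCD⟩
  refine Matroid.ext_indep ?_ fun ⦃I⦄ hI => ?_
  · simp only [del_ground, con_ground]
    rw [diff_diff_comm]
  · simp only [del_ground, con_ground] at hI
    rw [del_indep_iff, con_indep_iff hC, con_indep_iff hCE]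
    simp only [del_ground, con_ground, del_indep_iff]
    constructor
    · rintro ⟨⟨hIEC, J, hJ, hIJ⟩, hIED⟩
      have hJC : J ⊆ C := hJ.subset
      have hJED : J ⊆ M.E \ D := hJC.trans hCE
      refine ⟨by rwa [diff_diff_comm] at hI, J, ?_, hIJ, ?_⟩
      · exact (basis_del_iff (J := J) (C := C) hCE).mpr hJ
      · exact union_subset (fun x hx => ⟨(hIEC hx).1, (hIED hx).2⟩) hJED
    · rintro ⟨hIEDC, J, hJ, hIJ, hIJED⟩
      have hJ' := (basis_del_iff (J := J) (C := C) hCE).mp hJ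
      refine ⟨⟨?_, J, hJ', hIJ⟩, ?_⟩
      · intro x hx
        exact ⟨(hIEDC hx).1.1, (hIEDC hx).2⟩
      · intro x hx
        exact ⟨⟨(hIEDC hx).1.1, (hIEDC hx).2⟩, (hIEDC hx).1.2⟩


lemma basis_singleton_iff {M : Matroid α} {e : α} (he : M.Indep {e}) {J : Set α} :
    M.IsBasis J {e} ↔ J = {e} := by
  constructor
  · intro hJ
    exact hJ.eq_of_subset_indep he hJ.subset subset_rfl
  · rintro rfl
    exact he.isBasis_self

lemma con_singleton_indep_iff {M : Matroid α} {e : α} {I : Set α} (he : M.Indep {e}) :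
    (con M {e}).Indep I ↔ I ⊆ M.E \ {e} ∧ M.Indep (I ∪ {e}) := by
  rw [con_indep_iff (singleton_subset_iff.mpr (he.subset_ground rfl))]
  constructor
  · rintro ⟨hIE, J, hJ, hIJ⟩
    rw [basis_singleton_iff he] at hJ
    exact ⟨hIE, hJ ▸ hIJ⟩
  · rintro ⟨hIE, hIJ⟩
    exact ⟨hIE, {e}, he.isBasis_self, hIJ⟩

lemma isBinary_del {M : Matroid α} (h : IsBinary M) (D : Set α) : IsBinary (del M D) := by
  obtain ⟨ι, φ, hφ⟩ := h
  refine ⟨ι, φ, fun I hI => ?_⟩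
  rw [del_indep_iff, and_iff_left (show I ⊆ M.E \ D from hI)]
  exact hφ I ((show I ⊆ M.E \ D from hI).trans diff_subset)

lemma isBinary_con {M : Matroid α} (h : IsBinary M) {C : Set α} (hC : C ⊆ M.E) :
    IsBinary (con M C) := by
  classical
  obtain ⟨ι, φ, hφ⟩ := h
  obtain ⟨J, hJ⟩ := M.exists_isBasis C hC
  set S : Submodule (ZMod 2) (ι → ZMod 2) := Submodule.span (ZMod 2) (φ '' C) with hS
  let bs := Module.Basis.ofVectorSpace (ZMod 2) ((ι → ZMod 2) ⧸ S)
  let g : ((ι → ZMod 2) ⧸ S) →ₗ[ZMod 2]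
      (Module.Basis.ofVectorSpaceIndex (ZMod 2) ((ι → ZMod 2) ⧸ S) → ZMod 2) :=
    (Finsupp.lcoeFun).comp (bs.repr.toLinearMap)
  have hginj : Function.Injective g := by
    intro x y hxy
    apply bs.repr.injective
    apply DFunLike.coe_injective
    exact hxy
  -- the span of the image of any basis of `C` is the span of the image of `C`
  have hspan : ∀ J', M.IsBasis J' C → S = Submodule.span (ZMod 2) (φ '' J') := by
    intro J' hJ'
    refine le_antisymm (Submodule.span_le.mpr ?_) (Submodule.span_mono (image_mono hJ'.subset))
    rintro v ⟨c, hc, rfl⟩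
    by_cases hcJ : c ∈ J'
    · exact Submodule.subset_span ⟨c, hcJ, rfl⟩
    have hdep : M.Dep (insert c J') := hJ'.insert_dep ⟨hc, hcJ⟩
    have hnotli : ¬ ∀ s : Finset α, ↑s ⊆ (insert c J' : Set α) → ∑ x ∈ s, φ x = 0 → s = ∅ := by
      rw [← linindep_iff_sum φ (insert c J')]
      intro hli
      exact hdep.not_indep ((hφ _ hdep.subset_ground).mpr hli)
    push_neg at hnotli
    obtain ⟨s, hs_sub, hs_sum, hs_ne⟩ := hnotli
    have hcs : c ∈ s := by
      by_contra hcs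
      have hsJ' : ↑s ⊆ J' := by
        intro x hx
        rcases hs_sub hx with h1 | h1
        · exact absurd (h1 ▸ hx) hcs
        · exact h1
      have hliJ' := (linindep_iff_sum φ J').mp ((hφ J' (hJ'.subset.trans hC)).mp hJ'.indep)
      exact (Finset.nonempty_iff_ne_empty.mp hs_ne) (hliJ' s hsJ' hs_sum)
    have heq : φ c = ∑ y ∈ s.erase c, φ y := by
      refine eq_of_addzero ?_
      rw [Finset.add_sum_erase _ φ hcs]
      exact hs_sum
    rw [heq]
    refine Submodule.sum_mem _ fun y hy => Submodule.subset_span ⟨y, ?_, rfl⟩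
    rcases hs_sub (Finset.mem_of_mem_erase hy) with h1 | h1
    · exact absurd h1 (Finset.ne_of_mem_erase hy)
    · exact h1
  refine ⟨Module.Basis.ofVectorSpaceIndex (ZMod 2) ((ι → ZMod 2) ⧸ S),
    fun a => g (S.mkQ (φ a)), fun I hI => ?_⟩
  have hIEC : I ⊆ M.E \ C := hI
  have hIE : I ⊆ M.E := hIEC.trans diff_subset
  have hstep : LinearIndependent (ZMod 2) (fun x : I => g (S.mkQ (φ x.1)))
      ↔ LinearIndependent (ZMod 2) (fun x : I => S.mkQ (φ x.1)) := by
    exact LinearMap.linearIndependent_iff g (LinearMap.ker_eq_bot.mpr hginj)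
  rw [hstep, linindep_iff_sum (fun a => S.mkQ (φ a)) I]
  have hmksum : ∀ s : Finset α, (∑ x ∈ s, S.mkQ (φ x)) = S.mkQ (∑ x ∈ s, φ x) :=
    fun s => (map_sum S.mkQ φ s).symm
  constructor
  · intro hind s hsI hsum
    rw [con_indep_iff hC] at hind
    obtain ⟨-, J₁, hJ₁, hindIJ⟩ := hind
    rw [hmksum, Submodule.mkQ_apply, Submodule.Quotient.mk_eq_zero, hspan J₁ hJ₁,
      mem_span_iff_sum] at hsum
    obtain ⟨t, htJ₁, hts⟩ := hsum
    have hdisj : Disjoint s t := by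
      refine Finset.disjoint_left.mpr fun x hxs hxt => ?_
      exact (hIEC (hsI hxs)).2 (hJ₁.subset (htJ₁ hxt))
    have hsum0 : ∑ x ∈ s ∪ t, φ x = 0 := by
      rw [Finset.sum_union hdisj, hts, addself]
    have hli := (linindep_iff_sum φ (I ∪ J₁)).mp
      ((hφ _ (union_subset hIE (hJ₁.subset.trans hC))).mp hindIJ)
    have hcoe : (↑(s ∪ t) : Set α) ⊆ I ∪ J₁ := by
      push_cast
      exact union_subset_union hsI htJ₁
    have hempty := hli (s ∪ t) hcoe hsum0
    exact (Finset.union_eq_empty.mp hempty).1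
  · intro hq
    rw [con_indep_iff hC]
    refine ⟨hI, J, hJ, ?_⟩
    have hJC : J ⊆ C := hJ.subset
    refine (hφ _ (union_subset hIE (hJC.trans hC))).mpr ?_
    refine (linindep_iff_sum φ (I ∪ J)).mpr ?_
    intro u hu husum
    set uI := u.filter (fun x => x ∈ I) with huIdef
    set uJ := u.filter (fun x => x ∉ I) with huJdef
    have hsplit : ∑ x ∈ uI, φ x + ∑ x ∈ uJ, φ x = 0 := by
      rw [huIdef, huJdef, Finset.sum_filter_add_sum_filter_not]
      exact husum
    have huJJ : ↑uJ ⊆ J := by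
      intro x hx
      rw [huJdef] at hx
      simp only [Finset.coe_filter, mem_setOf_eq] at hx
      rcases hu hx.1 with h1 | h1
      · exact absurd h1 hx.2
      · exact h1
    have huImem : S.mkQ (∑ x ∈ uI, φ x) = 0 := by
      have h2 : S.mkQ (∑ x ∈ uJ, φ x) = 0 := by
        rw [Submodule.mkQ_apply, Submodule.Quotient.mk_eq_zero]
        exact Submodule.sum_mem _ fun y hy =>
          Submodule.subset_span ⟨y, hJC (huJJ hy), rfl⟩
      have h3 := congrArg S.mkQ hsplit
      rw [map_add, h2, add_zero, map_zero] at h3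
      exact h3
    have huIempty : uI = ∅ := by
      refine hq uI ?_ ?_
      · intro x hx
        rw [huIdef] at hx
        simp only [Finset.coe_filter, mem_setOf_eq] at hx
        exact hx.2
      · rw [hmksum]
        exact huImem
    have huJ0 : ∑ x ∈ uJ, φ x = 0 := by
      rw [huIempty, Finset.sum_empty, zero_add] at hsplit
      exact hsplit
    have hliJ := (linindep_iff_sum φ J).mp ((hφ J (hJC.trans hC)).mp hJ.indep)
    have huJempty := hliJ uJ huJJ huJ0
    have hu2 : u = uI ∪ uJ := by
      rw [huIdef, huJdef, Finset.filter_union_filter_not_eq]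
    rw [hu2, huIempty, huJempty, Finset.union_empty]

section Relax

variable {N M : Matroid α} {X : Set α}

lemma relax_base_X (hrel : IsRelaxation N X M) : M.IsBase X := (hrel.2 X).mpr (Or.inr rfl)

lemma relax_indep_iff (hrel : IsRelaxation N X M) {I : Set α} :
    M.Indep I ↔ N.Indep I ∨ I ⊆ X := by
  constructor
  · intro h
    obtain ⟨B, hB, hIB⟩ := h.exists_isBase_superset
    rcases (hrel.2 B).mp hB with h1 | rfl
    · exact Or.inl (h1.indep.subset hIB)
    · exact Or.inr hIB
  · rintro (h | h)
    · obtain ⟨B, hB, hIB⟩ := h.exists_isBase_superset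
      exact Matroid.indep_iff.mpr ⟨B, (hrel.2 B).mpr (Or.inl hB), hIB⟩
    · exact (relax_base_X hrel).indep.subset h

lemma ssubset_X_indep (hX : CircuitHyperplane N X) {I : Set α} (hIX : I ⊆ X) (hne : I ≠ X) :
    N.Indep I := by
  obtain ⟨x, hxX, hxI⟩ : ∃ x, x ∈ X ∧ x ∉ I := by
    by_contra hcon
    push_neg at hcon
    exact hne (hIX.antisymm hcon)
  exact (hX.1.2 x hxX).subset (subset_diff_singleton hIX hxI)

lemma relax_del_eq (hX : CircuitHyperplane N X) (hrel : IsRelaxation N X M) {e : α}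
    (he : e ∈ X) : del M {e} = del N {e} := by
  refine Matroid.ext_indep (by rw [del_ground, del_ground, hrel.1])
    fun ⦃I⦄ hI => ?_
  rw [del_indep_iff, del_indep_iff, hrel.1]
  have hIe : e ∉ I := fun hmem => ((show I ⊆ M.E \ {e} from hI) hmem).2 rfl
  refine and_congr_left fun _ => ?_
  rw [relax_indep_iff hrel]
  constructor
  · rintro (h | h)
    · exact h
    · exact ssubset_X_indep hX h (fun heq => hIe (heq ▸ he))
  · exact Or.inl

lemma relax_nonloop (hX : CircuitHyperplane N X) (hrel : IsRelaxation N X M) {e : α}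
    (he : e ∈ M.E) (heX : e ∉ X) : N.Indep {e} := by
  by_contra hdep
  have heN : e ∈ N.E := hrel.1 ▸ he
  have h1 : e ∈ N.closure ∅ := by
    rw [N.empty_indep.mem_closure_iff]
    left
    rw [Matroid.dep_iff]
    exact ⟨by rwa [insert_empty_eq], by rwa [insert_empty_eq, singleton_subset_iff]⟩
  have h2 : e ∈ X := by
    have hflat := hX.2.1
    have := N.closure_mono (empty_subset X)
    rw [hflat.closure] at this
    exact this h1
  exact heX h2

lemma relax_con_eq (hX : CircuitHyperplane N X) (hrel : IsRelaxation N X M) {e : α}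
    (he : e ∈ M.E) (heX : e ∉ X) : con M {e} = con N {e} := by
  have hN : N.Indep {e} := relax_nonloop hX hrel he heX
  have hM : M.Indep {e} := (relax_indep_iff hrel).mpr (Or.inl hN)
  refine Matroid.ext_indep (by rw [con_ground, con_ground, hrel.1])
    fun ⦃I⦄ hI => ?_
  rw [con_singleton_indep_iff hM, con_singleton_indep_iff hN, hrel.1]
  refine and_congr_right fun _ => ?_
  rw [relax_indep_iff hrel]
  constructor
  · rintro (h | h)
    · exact h
    · exact absurd (h (mem_union_right I rfl)) heX
  · exact Or.inl

end Relax

section Whirl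

variable {k : ℕ}

/-- Sums of `wheelRep` evaluate coordinatewise. -/
lemma wheelRep_sum_coord {s : Finset (Fin k ⊕ Fin k)}
    (hsum : ∑ x ∈ s, wheelRep k x = 0) (t : Fin k) :
    ∑ x ∈ s, wheelRep k x t = 0 := by
  have := congrFun hsum t
  rwa [Finset.sum_apply] at this

/-- coordinate killing: if some element of `s` has a `1` in coordinate `t` and
all others have a `0` there, the sum over `s` is nonzero. -/
lemma wheelRep_kill {s : Finset (Fin k ⊕ Fin k)}
    (hsum : ∑ x ∈ s, wheelRep k x = 0) {x0 : Fin k ⊕ Fin k} (hx0 : x0 ∈ s) (t : Fin k)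
    (h1 : wheelRep k x0 t = 1) (h0 : ∀ x ∈ s, x ≠ x0 → wheelRep k x t = 0) : False := by
  classical
  have hc := wheelRep_sum_coord hsum t
  rw [← Finset.add_sum_erase _ _ hx0, h1,
    Finset.sum_eq_zero (fun x hx => h0 x (Finset.mem_of_mem_erase hx)
      (Finset.ne_of_mem_erase hx)), add_zero] at hc
  exact one_ne_zero hc

lemma wheelRep_inl_apply (b t : Fin k) :
    wheelRep k (Sum.inl b) t = if t = b then 1 else 0 := by
  simp [wheelRep, Pi.single_apply]

lemma wheelRep_inr_eq (hk : 3 ≤ k) (m : Fin k) :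
    haveI : NeZero k := ⟨by omega⟩
    wheelRep k (Sum.inr m) = Pi.single m 1 + Pi.single (m + 1) 1 := by
  haveI : NeZero k := ⟨by omega⟩
  have hval : ((m + 1 : Fin k) : ℕ) = (m.val + 1) % k := by
    rw [Fin.val_add, Fin.val_one' k, Nat.mod_eq_of_lt (show 1 < k by omega)]
  simp only [wheelRep, Sum.elim_inr]
  congr 1
  ext t
  congr 1
  exact Fin.ext hval.symm

lemma wheelRep_inr_apply (hk : 3 ≤ k) (m t : Fin k) :
    haveI : NeZero k := ⟨by omega⟩
    wheelRep k (Sum.inr m) t = (if t = m then 1 else 0) + (if t = m + 1 then 1 else 0) := by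
  haveI : NeZero k := ⟨by omega⟩
  rw [wheelRep_inr_eq hk]
  simp [Pi.single_apply]

lemma fin_one_ne_zero (hk : 3 ≤ k) :
    haveI : NeZero k := ⟨by omega⟩
    (1 : Fin k) ≠ 0 := by
  haveI : NeZero k := ⟨by omega⟩
  intro h
  have := congrArg Fin.val h
  rw [Fin.val_one' k, Nat.mod_eq_of_lt (show 1 < k by omega)] at this
  simp at this

lemma fin_two_ne_zero (hk : 3 ≤ k) :
    haveI : NeZero k := ⟨by omega⟩
    (1 + 1 : Fin k) ≠ 0 := by
  haveI : NeZero k := ⟨by omega⟩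
  intro h
  have := congrArg Fin.val h
  rw [Fin.val_add, Fin.val_one' k, Nat.mod_eq_of_lt (show 1 < k by omega),
    Nat.mod_eq_of_lt (show 1 + 1 < k by omega)] at this
  simp at this

/-- total sum of the coordinates of `wheelRep` values. -/
lemma wheelRep_total (hk : 3 ≤ k) (x : Fin k ⊕ Fin k) :
    ∑ t, wheelRep k x t = (match x with | .inl _ => 1 | .inr _ => 0) := by
  haveI : NeZero k := ⟨by omega⟩
  cases x with
  | inl b => simp [wheelRep_inl_apply, Finset.sum_ite_eq]
  | inr m =>
    simp only [wheelRep_inr_apply hk]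
    rw [Finset.sum_add_distrib]
    simp [Finset.sum_ite_eq, addself]

/-- The rim is dependent: the sum of all rim vectors is `0`. -/
lemma rim_sum_zero (hk : 3 ≤ k) :
    ∑ m : Fin k, wheelRep k (Sum.inr m) = 0 := by
  haveI : NeZero k := ⟨by omega⟩
  have h1 : ∑ m : Fin k, wheelRep k (Sum.inr m)
      = ∑ m : Fin k, (Pi.single m 1 + Pi.single (m + 1) 1) :=
    Finset.sum_congr rfl fun m _ => wheelRep_inr_eq hk m
  rw [h1, Finset.sum_add_distrib]
  have h2 : ∑ m : Fin k, (Pi.single (m + 1) 1 : Fin k → ZMod 2)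
      = ∑ m : Fin k, (Pi.single m 1 : Fin k → ZMod 2) :=
    Fintype.sum_equiv (Equiv.addRight (1 : Fin k)) _ _ (fun m => rfl)
  rw [h2, addself]

open Fin.CommRing in
/-- Key computation: spoke `a` together with all rim elements except `j` is independent. -/
lemma path_indep (hk : 3 ≤ k) (a j : Fin k) (s : Finset (Fin k ⊕ Fin k))
    (hs : ↑s ⊆ insert (Sum.inl a) (range Sum.inr \ {Sum.inr j}))
    (hsum : ∑ x ∈ s, wheelRep k x = 0) : s = ∅ := by
  classical
  haveI : NeZero k := ⟨by omega⟩
  -- elements of `s` are `inl a` or `inr m` with `m ≠ j`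
  have hmem : ∀ x ∈ s, x = Sum.inl a ∨ ∃ m, m ≠ j ∧ x = Sum.inr m := by
    intro x hx
    rcases hs hx with h | ⟨⟨m, rfl⟩, hm⟩
    · exact Or.inl h
    · exact Or.inr ⟨m, fun h => hm (h ▸ rfl), rfl⟩
  -- `inl a ∉ s` via the total-coordinate sum
  have hinl : Sum.inl a ∉ s := by
    intro hins
    have htot : ∑ x ∈ s, (∑ t, wheelRep k x t) = 0 := by
      rw [← Finset.sum_comm]
      rw [Finset.sum_eq_zero]
      intro t _
      rw [← Finset.sum_apply t s (wheelRep k)]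
      rw [hsum]
      rfl
    rw [← Finset.add_sum_erase _ _ hins, wheelRep_total hk] at htot
    rw [Finset.sum_eq_zero, add_zero] at htot
    · exact one_ne_zero htot
    · intro x hx
      rcases hmem x (Finset.mem_of_mem_erase hx) with rfl | ⟨m, hm, rfl⟩
      · exact absurd rfl (Finset.ne_of_mem_erase hx)
      · rw [wheelRep_total hk]
  -- so all elements are rim elements with index ≠ j
  set S : Finset (Fin k) := Finset.univ.filter (fun m => Sum.inr m ∈ s) with hSdef
  have hSs : ∀ m, m ∈ S ↔ Sum.inr m ∈ s := by
    intro m; rw [hSdef]; simp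
  have hSimg : s = S.image Sum.inr := by
    ext x
    simp only [Finset.mem_image]
    constructor
    · intro hx
      rcases hmem x hx with rfl | ⟨m, hm, rfl⟩
      · exact absurd hx hinl
      · exact ⟨m, (hSs m).mpr hx, rfl⟩
    · rintro ⟨m, hm, rfl⟩
      exact (hSs m).mp hm
  have hSj : j ∉ S := by
    intro hj
    rcases hmem _ ((hSs j).mp hj) with h | ⟨m, hm, hEq⟩
    · exact Sum.inr_ne_inl h
    · exact hm (Sum.inr_injective hEq).symm
  -- the shift relation
  have hrel : ∀ t : Fin k, (t ∈ S ↔ t - 1 ∈ S) := by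
    intro t
    have hc := wheelRep_sum_coord hsum t
    rw [hSimg, Finset.sum_image (fun x _ y _ h => Sum.inr_injective h)] at hc
    have hc2 : ∑ m ∈ S, ((if t = m then (1 : ZMod 2) else 0) + (if t = m + 1 then 1 else 0)) = 0 :=
      (Finset.sum_congr rfl fun m _ => wheelRep_inr_apply hk m t).symm.trans hc
    rw [Finset.sum_add_distrib, Finset.sum_ite_eq S t (fun _ => (1:ZMod 2))] at hc2
    have h3 : ∑ m ∈ S, (if t = m + 1 then (1:ZMod 2) else 0)
        = if t - 1 ∈ S then 1 else 0 := by
      have : ∀ m ∈ S, (if t = m + 1 then (1:ZMod 2) else 0) = if t - 1 = m then 1 else 0 := by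
        intro m _
        congr 1
        simp only [eq_iff_iff]
        constructor
        · intro h; rw [h]; exact add_sub_cancel_right m 1
        · intro h; rw [← h]; exact (sub_add_cancel t 1).symm
      rw [Finset.sum_congr rfl this, Finset.sum_ite_eq S (t-1) (fun _ => (1:ZMod 2))]
    rw [h3] at hc2
    by_cases h4 : t ∈ S <;> by_cases h5 : t - 1 ∈ S <;>
      simp [h4, h5] at hc2 ⊢
  -- propagate around the cycle from j
  have hstep : ∀ n : ℕ, j + (n : Fin k) ∉ S := by
    intro n
    induction n with
    | zero => simpa using hSj
    | succ n ih =>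
      have hcast : ((n + 1 : ℕ) : Fin k) = (n : Fin k) + 1 := by push_cast; ring
      rw [hcast, ← add_assoc]
      intro hmem2
      rw [hrel (j + (n : Fin k) + 1), add_sub_cancel_right] at hmem2
      exact ih hmem2
  have hSempty : S = ∅ := by
    ext t
    simp only [Finset.notMem_empty, iff_false]
    have := hstep ((t - j).val)
    rwa [Fin.cast_val_eq_self, add_sub_cancel] at this
  rw [hSimg, hSempty, Finset.image_empty]

end Whirl

section WhirlMatroid

variable {k : ℕ} {Wh W : Matroid (Fin k ⊕ Fin k)}

lemma inl_not_mem_rim (a : Fin k) : Sum.inl a ∉ range (Sum.inr : Fin k → Fin k ⊕ Fin k) := by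
  rintro ⟨m, h⟩
  exact Sum.inr_ne_inl h

lemma vec_indep_iff (hWh : IsVecMatroid Wh (wheelRep k) univ) {I : Set (Fin k ⊕ Fin k)} :
    Wh.Indep I ↔ ∀ s : Finset (Fin k ⊕ Fin k), ↑s ⊆ I → ∑ x ∈ s, wheelRep k x = 0 → s = ∅ := by
  rw [hWh.2 I (subset_univ I), linindep_iff_sum]

lemma whirl_ground (hWh : IsVecMatroid Wh (wheelRep k) univ)
    (hrelW : IsRelaxation Wh (range Sum.inr) W) : W.E = univ := hrelW.1.trans hWh.1

lemma rim_indep (hrelW : IsRelaxation Wh (range Sum.inr) W) :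
    W.Indep (range Sum.inr) := (relax_base_X hrelW).indep

lemma rim_insert_dep (hk : 3 ≤ k) (hWh : IsVecMatroid Wh (wheelRep k) univ)
    (hrelW : IsRelaxation Wh (range Sum.inr) W) (a : Fin k) :
    ¬ W.Indep (insert (Sum.inl a) (range Sum.inr)) := by
  classical
  intro h
  rcases (relax_indep_iff hrelW).mp h with h1 | h1
  · have h2 : Wh.Indep (range Sum.inr) := h1.subset (subset_insert _ _)
    rw [vec_indep_iff hWh] at h2
    have h3 := h2 ((Finset.univ : Finset (Fin k)).image (Sum.inr : Fin k → Fin k ⊕ Fin k)) (by simp [subset_def])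
      (by rw [Finset.sum_image (fun x _ y _ h => Sum.inr_injective h)]; exact rim_sum_zero hk)
    rw [Finset.image_eq_empty] at h3
    have h4 : (⟨0, by omega⟩ : Fin k) ∈ Finset.univ := Finset.mem_univ _
    rw [h3] at h4
    simp at h4
  · exact inl_not_mem_rim a (h1 (mem_insert _ _))

lemma spoke_rim_indep (hk : 3 ≤ k) (hWh : IsVecMatroid Wh (wheelRep k) univ)
    (hrelW : IsRelaxation Wh (range Sum.inr) W) (a j : Fin k) :
    W.Indep (insert (Sum.inl a) (range Sum.inr \ {Sum.inr j})) := by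
  refine (relax_indep_iff hrelW).mpr (Or.inl ?_)
  rw [vec_indep_iff hWh]
  exact fun s hs hsum => path_indep hk a j s hs hsum

lemma pair_spokes_indep (hk : 3 ≤ k) (hWh : IsVecMatroid Wh (wheelRep k) univ)
    (hrelW : IsRelaxation Wh (range Sum.inr) W) {a b : Fin k} (hab : a ≠ b) :
    W.Indep {Sum.inl a, Sum.inl b} := by
  refine (relax_indep_iff hrelW).mpr (Or.inl ?_)
  rw [vec_indep_iff hWh]
  intro s hs hsum
  have hmem : ∀ x ∈ s, x = Sum.inl a ∨ x = Sum.inl b := fun x hx => hs hx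
  have ha : Sum.inl a ∉ s := by
    intro hins
    refine wheelRep_kill hsum hins a ?_ ?_
    · rw [wheelRep_inl_apply, if_pos rfl]
    · intro x hx hne
      rcases hmem x hx with rfl | rfl
      · exact absurd rfl hne
      · rw [wheelRep_inl_apply, if_neg hab]
  have hb : Sum.inl b ∉ s := by
    intro hins
    refine wheelRep_kill hsum hins b ?_ ?_
    · rw [wheelRep_inl_apply, if_pos rfl]
    · intro x hx hne
      rcases hmem x hx with rfl | rfl
      · rw [wheelRep_inl_apply, if_neg (Ne.symm hab)]
      · exact absurd rfl hne
  ext x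
  simp only [Finset.notMem_empty, iff_false]
  intro hx
  rcases hmem x hx with rfl | rfl
  · exact ha hx
  · exact hb hx

lemma triple_indep (hk : 3 ≤ k) (hWh : IsVecMatroid Wh (wheelRep k) univ)
    (hrelW : IsRelaxation Wh (range Sum.inr) W) (i : Fin k) :
    haveI : NeZero k := ⟨by omega⟩
    W.Indep {Sum.inl i, Sum.inl (i + 1 + 1), Sum.inr i} := by
  haveI : NeZero k := ⟨by omega⟩
  have hne1 : i + 1 ≠ i := fun h => fin_one_ne_zero hk (by rwa [add_eq_left] at h)
  have hne2 : i + 1 + 1 ≠ i := fun h => fin_two_ne_zero hk (by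
    rw [add_assoc] at h; rwa [add_eq_left] at h)
  have hne3 : i + 1 + 1 ≠ i + 1 := fun h => fin_one_ne_zero hk (by
    rwa [add_eq_left] at h)
  refine (relax_indep_iff hrelW).mpr (Or.inl ?_)
  rw [vec_indep_iff hWh]
  intro s hs hsum
  have hmem : ∀ x ∈ s, x = Sum.inl i ∨ x = Sum.inl (i + 1 + 1) ∨ x = Sum.inr i :=
    fun x hx => hs hx
  have hb : Sum.inl (i + 1 + 1) ∉ s := by
    intro hins
    refine wheelRep_kill hsum hins (i + 1 + 1) ?_ ?_
    · rw [wheelRep_inl_apply, if_pos rfl]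
    · intro x hx hne
      rcases hmem x hx with rfl | rfl | rfl
      · rw [wheelRep_inl_apply, if_neg hne2]
      · exact absurd rfl hne
      · rw [wheelRep_inr_apply hk, if_neg hne2, if_neg hne3, add_zero]
  have hc : Sum.inr i ∉ s := by
    intro hins
    refine wheelRep_kill hsum hins (i + 1) ?_ ?_
    · rw [wheelRep_inr_apply hk, if_neg hne1, if_pos rfl, zero_add]
    · intro x hx hne
      rcases hmem x hx with rfl | rfl | rfl
      · rw [wheelRep_inl_apply, if_neg hne1]
      · exact absurd hx hb
      · exact absurd rfl hne
  have ha : Sum.inl i ∉ s := by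
    intro hins
    refine wheelRep_kill hsum hins i ?_ ?_
    · rw [wheelRep_inl_apply, if_pos rfl]
    · intro x hx hne
      rcases hmem x hx with rfl | rfl | rfl
      · exact absurd rfl hne
      · exact absurd hx hb
      · exact absurd hx hc
  ext x
  simp only [Finset.notMem_empty, iff_false]
  intro hx
  rcases hmem x hx with rfl | rfl | rfl
  · exact ha hx
  · exact hb hx
  · exact hc hx

end WhirlMatroid

section Circuits

variable {k : ℕ} {Wh W : Matroid (Fin k ⊕ Fin k)}

lemma rim_singleton_indep (hrelW : IsRelaxation Wh (range Sum.inr) W) (i : Fin k) :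
    W.Indep {Sum.inr i} :=
  (rim_indep hrelW).subset (singleton_subset_iff.mpr ⟨i, rfl⟩)

lemma diff_union_rim (i : Fin k) :
    (range Sum.inr \ {Sum.inr i}) ∪ {Sum.inr i} = range (Sum.inr : Fin k → Fin k ⊕ Fin k) := by
  rw [Set.union_singleton, Set.insert_diff_singleton,
    Set.insert_eq_of_mem (show Sum.inr i ∈ range (Sum.inr : Fin k → Fin k ⊕ Fin k) from ⟨i, rfl⟩)]

/-- circuits of the whirl contracted by one rim element. -/
lemma con_whirl_circuit (hk : 3 ≤ k) (hWh : IsVecMatroid Wh (wheelRep k) univ)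
    (hrelW : IsRelaxation Wh (range Sum.inr) W) (i a : Fin k) :
    Circuit (con W {Sum.inr i}) (insert (Sum.inl a) (range Sum.inr \ {Sum.inr i})) := by
  have hWE : W.E = univ := whirl_ground hWh hrelW
  have hWr : W.Indep {Sum.inr i} := rim_singleton_indep hrelW i
  have hsubE : insert (Sum.inl a) (range Sum.inr \ {Sum.inr i}) ⊆ W.E \ {Sum.inr i} := by
    rintro x (rfl | ⟨hxR, hxne⟩)
    · exact ⟨hWE ▸ mem_univ _, fun h => Sum.inl_ne_inr h⟩
    · exact ⟨hWE ▸ mem_univ _, hxne⟩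
  constructor
  · rw [Matroid.dep_iff]
    refine ⟨?_, hsubE⟩
    intro hcon
    rw [con_singleton_indep_iff hWr] at hcon
    obtain ⟨-, hind⟩ := hcon
    refine rim_insert_dep hk hWh hrelW a ?_
    rwa [Set.insert_union, diff_union_rim] at hind
  · intro e he
    rcases he with rfl | ⟨⟨m, rfl⟩, hmne⟩
    · rw [insert_diff_self_of_notMem (fun h => inl_not_mem_rim a h.1)]
      rw [con_singleton_indep_iff hWr]
      refine ⟨fun x hx => ⟨hWE ▸ mem_univ _, hx.2⟩, ?_⟩
      rw [diff_union_rim]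
      exact rim_indep hrelW
    · rw [← insert_diff_singleton_comm (fun h => Sum.inl_ne_inr h) _]
      rw [con_singleton_indep_iff hWr]
      constructor
      · intro x hx
        rcases hx with rfl | ⟨⟨hxR, hxi⟩, -⟩
        · exact ⟨hWE ▸ mem_univ _, fun h => Sum.inl_ne_inr h⟩
        · exact ⟨hWE ▸ mem_univ _, hxi⟩
      · refine (spoke_rim_indep hk hWh hrelW a m).subset ?_
        rintro x (hx | rfl)
        · rcases hx with rfl | ⟨⟨hxR, -⟩, hxm⟩
          · exact mem_insert _ _
          · exact mem_insert_of_mem _ ⟨hxR, hxm⟩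
        · refine mem_insert_of_mem _ ⟨⟨i, rfl⟩, fun h => hmne ?_⟩
          rw [mem_singleton_iff] at h ⊢
          rw [h]

/-- circuits of the whirl with one spoke deleted. -/
lemma del_whirl_circuit (hk : 3 ≤ k) (hWh : IsVecMatroid Wh (wheelRep k) univ)
    (hrelW : IsRelaxation Wh (range Sum.inr) W) {j a : Fin k} (haj : a ≠ j) :
    Circuit (del W {Sum.inl j}) (insert (Sum.inl a) (range Sum.inr)) := by
  have hWE : W.E = univ := whirl_ground hWh hrelW
  have hsubE : insert (Sum.inl a) (range Sum.inr) ⊆ W.E \ {Sum.inl j} := by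
    rintro x (rfl | ⟨m, rfl⟩)
    · exact ⟨hWE ▸ mem_univ _, fun h => haj (Sum.inl_injective h)⟩
    · exact ⟨hWE ▸ mem_univ _, fun h => Sum.inr_ne_inl h⟩
  constructor
  · rw [Matroid.dep_iff]
    refine ⟨?_, hsubE⟩
    rw [del_indep_iff]
    rintro ⟨hind, -⟩
    exact rim_insert_dep hk hWh hrelW a hind
  · intro e he
    rcases he with rfl | ⟨m, rfl⟩
    · rw [insert_diff_self_of_notMem (inl_not_mem_rim a), del_indep_iff]
      exact ⟨rim_indep hrelW, fun x hx => hsubE (mem_insert_of_mem _ hx)⟩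
    · rw [← insert_diff_singleton_comm (fun h => Sum.inl_ne_inr h) _, del_indep_iff]
      refine ⟨spoke_rim_indep hk hWh hrelW a m, ?_⟩
      intro x hx
      rcases hx with rfl | ⟨hxR, -⟩
      · exact hsubE (mem_insert _ _)
      · exact hsubE (mem_insert_of_mem _ hxR)

end Circuits

section BinaryContradiction

variable {α : Type u} {ι : Type v}

/-- a circuit of a binary matroid is (the coercion of) a finset whose vectors sum to zero. -/
lemma circuit_finset_sum {Q : Matroid α} (ψ : α → ι → ZMod 2)
    (hrep : ∀ I, I ⊆ Q.E → (Q.Indep I ↔ LinearIndependent (ZMod 2) (fun x : I => ψ x.1)))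
    {C : Set α} (hC : Circuit Q C) :
    ∃ s : Finset α, ↑s = C ∧ ∑ x ∈ s, ψ x = 0 := by
  have hCE : C ⊆ Q.E := hC.1.subset_ground
  have hnotli : ¬ ∀ s : Finset α, ↑s ⊆ C → ∑ x ∈ s, ψ x = 0 → s = ∅ := by
    rw [← linindep_iff_sum ψ C]
    intro hli
    exact hC.1.not_indep ((hrep C hCE).mpr hli)
  push_neg at hnotli
  obtain ⟨s, hsC, hsum, hne⟩ := hnotli
  refine ⟨s, ?_, hsum⟩
  refine hsC.antisymm ?_
  intro e heC
  by_contra hes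
  have hind : Q.Indep (C \ {e}) := hC.2 e heC
  have hli := (linindep_iff_sum ψ (C \ {e})).mp
    ((hrep _ (diff_subset.trans hCE)).mp hind)
  refine (Finset.nonempty_iff_ne_empty.mp hne) (hli s (fun x hx => ⟨hsC hx, ?_⟩) hsum)
  rintro rfl
  exact hes hx

/-- two distinct circuits of a binary matroid cannot have independent symmetric difference. -/
lemma binary_circuits_symmdiff {Q : Matroid α} (ψ : α → ι → ZMod 2)
    (hrep : ∀ I, I ⊆ Q.E → (Q.Indep I ↔ LinearIndependent (ZMod 2) (fun x : I => ψ x.1)))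
    {C₁ C₂ : Set α} (h1 : Circuit Q C₁) (h2 : Circuit Q C₂) (hne : C₁ ≠ C₂)
    (hΔ : Q.Indep ((C₁ \ C₂) ∪ (C₂ \ C₁))) : False := by
  classical
  obtain ⟨s₁, hs₁, hsum₁⟩ := circuit_finset_sum ψ hrep h1
  obtain ⟨s₂, hs₂, hsum₂⟩ := circuit_finset_sum ψ hrep h2
  set Δ : Finset α := (s₁ \ s₂) ∪ (s₂ \ s₁) with hΔdef
  have hΔcoe : (↑Δ : Set α) = (C₁ \ C₂) ∪ (C₂ \ C₁) := by
    rw [hΔdef]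
    push_cast
    rw [hs₁, hs₂]
  have hΔsum : ∑ x ∈ Δ, ψ x = 0 := by
    have hid : Δ = (s₁ ∪ s₂) \ (s₁ ∩ s₂) := by
      ext x
      simp only [hΔdef, Finset.mem_union, Finset.mem_sdiff, Finset.mem_inter]
      tauto
    have e1 : ∑ x ∈ (s₁ ∪ s₂) \ (s₁ ∩ s₂), ψ x + ∑ x ∈ s₁ ∩ s₂, ψ x = ∑ x ∈ s₁ ∪ s₂, ψ x :=
      Finset.sum_sdiff Finset.inter_subset_union
    have e2 : ∑ x ∈ s₁ ∪ s₂, ψ x + ∑ x ∈ s₁ ∩ s₂, ψ x = ∑ x ∈ s₁, ψ x + ∑ x ∈ s₂, ψ x :=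
      Finset.sum_union_inter
    have e3 : ∑ x ∈ (s₁ ∪ s₂) \ (s₁ ∩ s₂), ψ x
        + (∑ x ∈ s₁ ∩ s₂, ψ x + ∑ x ∈ s₁ ∩ s₂, ψ x) = 0 := by
      rw [← add_assoc, e1, e2, hsum₁, hsum₂, add_zero]
    rw [addself, add_zero] at e3
    rw [hid]
    exact e3
  have hΔne : Δ ≠ ∅ := by
    intro h0
    apply hne
    rw [← hs₁, ← hs₂]
    have h0' : s₁ \ s₂ = ∅ ∧ s₂ \ s₁ = ∅ := Finset.union_eq_empty.mp h0
    have h1' := Finset.sdiff_eq_empty_iff_subset.mp h0'.1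
    have h2' := Finset.sdiff_eq_empty_iff_subset.mp h0'.2
    exact_mod_cast congrArg (fun s : Finset α => (s : Set α)) (h1'.antisymm h2')
  have hli := (linindep_iff_sum ψ ((C₁ \ C₂) ∪ (C₂ \ C₁))).mp
    ((hrep _ hΔ.subset_ground).mp hΔ)
  exact hΔne (hli Δ (hΔcoe.le) hΔsum)

end BinaryContradiction

section Transfer

variable {α : Type u} {k : ℕ}

lemma fin_add_one_ne (hk : 3 ≤ k) (i : Fin k) :
    haveI : NeZero k := ⟨by omega⟩
    i + 1 ≠ i := by
  haveI : NeZero k := ⟨by omega⟩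
  exact fun h => fin_one_ne_zero hk (by rwa [add_eq_left] at h)

lemma fin_add_two_ne (hk : 3 ≤ k) (i : Fin k) :
    haveI : NeZero k := ⟨by omega⟩
    i + 1 + 1 ≠ i := by
  haveI : NeZero k := ⟨by omega⟩
  exact fun h => fin_two_ne_zero hk (by rw [add_assoc] at h; rwa [add_eq_left] at h)

lemma fin_add_two_ne_one (hk : 3 ≤ k) (i : Fin k) :
    haveI : NeZero k := ⟨by omega⟩
    i + 1 + 1 ≠ i + 1 := by
  haveI : NeZero k := ⟨by omega⟩
  exact fun h => fin_one_ne_zero hk (by rwa [add_eq_left] at h)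

lemma insert_diff_pair {β : Type v} {s : Set β} {x y : β} (hx : x ∉ s) (hy : y ∉ s)
    (hxy : x ≠ y) : (insert x s \ insert y s) ∪ (insert y s \ insert x s) = {x, y} := by
  ext z
  simp only [mem_union, mem_diff, mem_insert_iff, mem_singleton_iff, not_or]
  constructor
  · rintro (⟨h1 | h1, h2, h3⟩ | ⟨h1 | h1, h2, h3⟩)
    · exact Or.inl h1
    · exact absurd h1 h3
    · exact Or.inr h1
    · exact absurd h1 h3
  · rintro (rfl | rfl)
    · exact Or.inl ⟨Or.inl rfl, hxy, fun h => hx h⟩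
    · exact Or.inr ⟨Or.inl rfl, fun h => hxy h.symm, fun h => hy h⟩

variable {W : Matroid (Fin k ⊕ Fin k)} {P : Matroid α} {f : Fin k ⊕ Fin k → α}

lemma iso_image_subset (hWE : W.E = univ) (hbij : Set.BijOn f W.E P.E)
    {I : Set (Fin k ⊕ Fin k)} : f '' I ⊆ P.E := by
  rintro x ⟨y, hy, rfl⟩
  exact hbij.mapsTo (hWE ▸ mem_univ y)

lemma iso_con_indep (hWE : W.E = univ) (hbij : Set.BijOn f W.E P.E)
    (hiso : ∀ I, I ⊆ W.E → (W.Indep I ↔ P.Indep (f '' I)))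
    {r : Fin k ⊕ Fin k} (hWr : W.Indep {r}) {I : Set (Fin k ⊕ Fin k)}
    (hI : I ⊆ W.E \ {r}) :
    ((con W {r}).Indep I ↔ (con P {f r}).Indep (f '' I)) := by
  have hfinj : Function.Injective f := by
    have := hbij.injOn
    rw [hWE] at this
    exact Set.injOn_univ.mp this
  have hPr : P.Indep {f r} := by
    have h := (hiso {r} (hWE ▸ subset_univ _)).mp hWr
    rwa [image_singleton] at h
  rw [con_singleton_indep_iff hWr, con_singleton_indep_iff hPr]
  have himg : f '' (I ∪ {r}) = f '' I ∪ {f r} := by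
    rw [image_union, image_singleton]
  constructor
  · rintro ⟨-, hind⟩
    refine ⟨?_, by rw [← himg]; exact (hiso _ (hWE ▸ subset_univ _)).mp hind⟩
    rintro x ⟨y, hy, rfl⟩
    exact ⟨hbij.mapsTo (hWE ▸ mem_univ y), fun h => (hI hy).2 (by
      rw [mem_singleton_iff] at h ⊢
      exact hfinj h)⟩
  · rintro ⟨-, hind⟩
    refine ⟨hI, (hiso _ (hWE ▸ subset_univ _)).mpr (by rwa [himg])⟩

lemma iso_del_indep (hWE : W.E = univ) (hbij : Set.BijOn f W.E P.E)
    (hiso : ∀ I, I ⊆ W.E → (W.Indep I ↔ P.Indep (f '' I)))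
    {x0 : Fin k ⊕ Fin k} {I : Set (Fin k ⊕ Fin k)}
    (hI : I ⊆ W.E \ {x0}) :
    ((del W {x0}).Indep I ↔ (del P {f x0}).Indep (f '' I)) := by
  have hfinj : Function.Injective f := by
    have := hbij.injOn
    rw [hWE] at this
    exact Set.injOn_univ.mp this
  rw [del_indep_iff, del_indep_iff]
  constructor
  · rintro ⟨hind, -⟩
    refine ⟨(hiso _ (hWE ▸ subset_univ _)).mp hind, ?_⟩
    rintro x ⟨y, hy, rfl⟩
    exact ⟨hbij.mapsTo (hWE ▸ mem_univ y), fun h => (hI hy).2 (by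
      rw [mem_singleton_iff] at h ⊢
      exact hfinj h)⟩
  · rintro ⟨hind, -⟩
    exact ⟨(hiso _ (hWE ▸ subset_univ _)).mpr hind, hI⟩

end Transfer

end Aux

/-- if `M` is obtained from a binary matroid by relaxing a circuit-hyperplane
`X`, then in every `𝒲^k`-minor of `M` (`k ≥ 3`) all rim elements lie in `X` and no spoke
element lies in `X`. -/
theorem whirl_minor_rim_spokes {α : Type u} (N M : Matroid α) (X : Set α)
    (hbin : IsBinary N) (hX : CircuitHyperplane N X) (hrel : IsRelaxation N X M)
    (k : ℕ) (hk : 3 ≤ k)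
    (hminor : ∃ (P : Matroid α) (W : Matroid (Fin k ⊕ Fin k)),
        IsMinorOf P M ∧ IsWhirl k W ∧ Iso W P) :
    ∀ (P : Matroid α) (W : Matroid (Fin k ⊕ Fin k)) (f : Fin k ⊕ Fin k → α),
      IsMinorOf P M → IsWhirl k W →
      Set.BijOn f W.E P.E → (∀ I, I ⊆ W.E → (W.Indep I ↔ P.Indep (f '' I))) →
      (∀ i, f (Sum.inr i) ∈ X) ∧ (∀ i, f (Sum.inl i) ∉ X) := by
  clear hminor
  intro P W f hminorP hwhirl hbij hiso
  haveI : NeZero k := ⟨by omega⟩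
  obtain ⟨Wh, hWh, hrelW⟩ := hwhirl
  obtain ⟨C, D, hCE, hDE, hCD, hPdef⟩ := hminorP
  have hWE : W.E = univ := whirl_ground hWh hrelW
  have hPE : P.E = (M.E \ C) \ D := by rw [hPdef]; rfl
  have hfinj : Function.Injective f := by
    have h := hbij.injOn
    rw [hWE] at h
    exact Set.injOn_univ.mp h
  have hDMC : D ⊆ (con M C).E := by
    rw [con_ground]
    exact fun x hx => ⟨hDE hx, fun hxC => (Set.disjoint_left.mp hCD hxC) hx⟩
  constructor
  · -- every rim element is mapped into X
    intro i
    by_contra haX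
    set a := f (Sum.inr i) with hadef
    have haP : a ∈ P.E := hbij.mapsTo (hWE ▸ mem_univ _)
    rw [hPE] at haP
    obtain ⟨⟨haM, haC⟩, haD⟩ := haP
    have h1 : {a} ⊆ (con M C).E := by
      rw [con_ground]; exact singleton_subset_iff.mpr ⟨haM, haC⟩
    have hstep1 : con P {a} = del (con (con M C) {a}) D := by
      rw [hPdef]
      exact (del_con_comm h1 hDMC (disjoint_singleton_left.mpr haD)).symm
    have hstep2 : con (con M C) {a} = con (con N {a}) C := by
      rw [con_con, union_comm C {a}, ← con_con, relax_con_eq hX hrel haM haX]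
    have hbinQ : IsBinary (con P {a}) := by
      rw [hstep1, hstep2]
      refine isBinary_del (isBinary_con (isBinary_con hbin ?_) ?_) D
      · exact singleton_subset_iff.mpr (hrel.1 ▸ haM)
      · rw [con_ground]
        exact fun x hx => ⟨hrel.1 ▸ hCE hx, fun hxa => haC (by
          rw [mem_singleton_iff] at hxa
          exact hxa ▸ hx)⟩
    obtain ⟨ι, ψ, hψ⟩ := hbinQ
    have hWr : W.Indep {Sum.inr i} := rim_singleton_indep hrelW i
    have hrepW : ∀ I, I ⊆ (con W {Sum.inr i}).E →
        ((con W {Sum.inr i}).Indep I ↔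
          LinearIndependent (ZMod 2) (fun x : I => ψ (f x.1))) := by
      intro I hI
      rw [con_ground] at hI
      rw [iso_con_indep hWE hbij hiso hWr hI]
      have hsub : f '' I ⊆ (con P {a}).E := by
        rw [con_ground]
        rintro x ⟨y, hy, rfl⟩
        refine ⟨hbij.mapsTo (hWE ▸ mem_univ y), fun h => (hI hy).2 ?_⟩
        rw [mem_singleton_iff] at h ⊢
        exact hfinj h
      rw [hψ _ hsub]
      exact (linearIndependent_equiv' (R := ZMod 2) (Equiv.Set.imageOfInjOn f I hfinj.injOn)
        (f := fun x : (f '' I) => ψ x.1) (g := fun x : I => ψ (f x.1)) rfl).symm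
    have hC1 := con_whirl_circuit hk hWh hrelW i i
    have hC2 := con_whirl_circuit hk hWh hrelW i (i + 1 + 1)
    have hne12 : insert (Sum.inl i) (range Sum.inr \ {Sum.inr i})
        ≠ insert (Sum.inl (i + 1 + 1)) (range Sum.inr \ {Sum.inr i}) := by
      intro h
      have hmem : Sum.inl i ∈ insert (Sum.inl (i + 1 + 1))
          (range Sum.inr \ {Sum.inr i}) := h ▸ mem_insert _ _
      rcases mem_insert_iff.mp hmem with h' | h'
      · exact fin_add_two_ne hk i (Sum.inl_injective h').symm
      · exact inl_not_mem_rim i h'.1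
    have hΔeq := insert_diff_pair (s := range Sum.inr \ {Sum.inr i})
      (x := Sum.inl i) (y := Sum.inl (i + 1 + 1))
      (fun h => inl_not_mem_rim i h.1) (fun h => inl_not_mem_rim _ h.1)
      (fun h => fin_add_two_ne hk i (Sum.inl_injective h).symm)
    have hΔind : (con W {Sum.inr i}).Indep {Sum.inl i, Sum.inl (i + 1 + 1)} := by
      rw [con_singleton_indep_iff hWr]
      constructor
      · rintro x (rfl | rfl)
        · exact ⟨hWE ▸ mem_univ _, by simp⟩
        · exact ⟨hWE ▸ mem_univ _, by simp⟩
      · refine (triple_indep hk hWh hrelW i).subset ?_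
        intro x hx
        simp only [Set.union_singleton, mem_insert_iff, mem_singleton_iff] at hx ⊢
        tauto
    exact binary_circuits_symmdiff (fun x => ψ (f x)) hrepW hC1 hC2 hne12
      (by rw [hΔeq]; exact hΔind)
  · -- no spoke element is mapped into X
    intro j hbX
    set b := f (Sum.inl j) with hbdef
    have hbP : b ∈ P.E := hbij.mapsTo (hWE ▸ mem_univ _)
    rw [hPE] at hbP
    obtain ⟨⟨hbM, hbC⟩, hbD⟩ := hbP
    have hstep1 : del P {b} = del (del (con M C) {b}) D := by
      rw [hPdef, del_del, del_del, union_comm D {b}]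
    have hstep2 : del (con M C) {b} = con (del N {b}) C := by
      rw [del_con_comm hCE (singleton_subset_iff.mpr hbM)
        (disjoint_singleton_right.mpr hbC), relax_del_eq hX hrel hbX]
    have hbinQ : IsBinary (del P {b}) := by
      rw [hstep1, hstep2]
      refine isBinary_del (isBinary_con (isBinary_del hbin {b}) ?_) D
      rw [del_ground]
      exact fun x hx => ⟨hrel.1 ▸ hCE hx, fun hxb => hbC (by
        rw [mem_singleton_iff] at hxb
        exact hxb ▸ hx)⟩
    obtain ⟨ι, ψ, hψ⟩ := hbinQ
    have hrepW : ∀ I, I ⊆ (del W {Sum.inl j}).E →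
        ((del W {Sum.inl j}).Indep I ↔
          LinearIndependent (ZMod 2) (fun x : I => ψ (f x.1))) := by
      intro I hI
      rw [del_ground] at hI
      rw [iso_del_indep hWE hbij hiso hI]
      have hsub : f '' I ⊆ (del P {b}).E := by
        rw [del_ground]
        rintro x ⟨y, hy, rfl⟩
        refine ⟨hbij.mapsTo (hWE ▸ mem_univ y), fun h => (hI hy).2 ?_⟩
        rw [mem_singleton_iff] at h ⊢
        exact hfinj h
      rw [hψ _ hsub]
      exact (linearIndependent_equiv' (R := ZMod 2) (Equiv.Set.imageOfInjOn f I hfinj.injOn)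
        (f := fun x : (f '' I) => ψ x.1) (g := fun x : I => ψ (f x.1)) rfl).symm
    have hC1 := del_whirl_circuit hk hWh hrelW (fin_add_one_ne hk j)
    have hC2 := del_whirl_circuit hk hWh hrelW (fin_add_two_ne hk j)
    have hne12 : insert (Sum.inl (j + 1)) (range (Sum.inr : Fin k → Fin k ⊕ Fin k))
        ≠ insert (Sum.inl (j + 1 + 1)) (range Sum.inr) := by
      intro h
      have hmem : Sum.inl (j + 1) ∈ insert (Sum.inl (j + 1 + 1))
          (range (Sum.inr : Fin k → Fin k ⊕ Fin k)) := h ▸ mem_insert _ _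
      rcases mem_insert_iff.mp hmem with h' | h'
      · exact fin_add_two_ne_one hk j (Sum.inl_injective h').symm
      · exact inl_not_mem_rim _ h'
    have hΔeq := insert_diff_pair (s := range (Sum.inr : Fin k → Fin k ⊕ Fin k))
      (x := Sum.inl (j + 1)) (y := Sum.inl (j + 1 + 1))
      (inl_not_mem_rim _) (inl_not_mem_rim _)
      (fun h => fin_add_two_ne_one hk j (Sum.inl_injective h).symm)
    have hΔind : (del W {Sum.inl j}).Indep {Sum.inl (j + 1), Sum.inl (j + 1 + 1)} := by
      rw [del_indep_iff]
      refine ⟨pair_spokes_indep hk hWh hrelW (fun h => fin_add_two_ne_one hk j h.symm), ?_⟩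
      rintro x (rfl | rfl)
      · exact ⟨hWE ▸ mem_univ _, fun h => fin_add_one_ne hk j
          (Sum.inl_injective (mem_singleton_iff.mp h))⟩
      · exact ⟨hWE ▸ mem_univ _, fun h => fin_add_two_ne hk j
          (Sum.inl_injective (mem_singleton_iff.mp h))⟩
    exact binary_circuits_symmdiff (fun x => ψ (f x)) hrepW hC1 hC2 hne12
      (by rw [hΔeq]; exact hΔind)

end NearlyBinary
end

section
/- For an even integer r > 2, let M_r be the vector matroid over GF(2) of the matrix [I_r | J_r − I_r], with columns labeled e_1, ..., e_{2r}. Then {e_2, e_3, ..., e_{r+1}} and its complement {e_1, e_{r+2}, ..., e_{2r}} are both circuit-hyperplanes of M_r. -/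
set_option autoImplicit false

open Set

universe u v

namespace NearlyBinary

variable {α : Type u} {β : Type v}

section SpikeAux

/-- The column map of the matrix `[I_r | J_r - I_r]`. -/
def phi (r : ℕ) : Fin r ⊕ Fin r → Fin r → ZMod 2 :=
  Sum.elim (fun i => Pi.single i (1 : ZMod 2))
    (fun j => fun i => if i = j then (0 : ZMod 2) else 1)

variable {r : ℕ}

/-- standard basis vector -/
def eps (i : Fin r) : Fin r → ZMod 2 := Pi.single i 1

/-- all-ones minus a standard basis vector -/
def ww (j : Fin r) : Fin r → ZMod 2 := fun i => if i = j then 0 else 1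

lemma phi_inl (i : Fin r) : phi r (Sum.inl i) = eps i := rfl

lemma phi_inr (j : Fin r) : phi r (Sum.inr j) = ww j := rfl

lemma eps_apply (i k : Fin r) : eps i k = if k = i then 1 else 0 := Pi.single_apply i 1 k

lemma ww_apply (j k : Fin r) : ww j k = if k = j then 0 else 1 := rfl

lemma eps_inj : Function.Injective (eps (r := r)) := by
  intro i j h
  by_contra hne
  have h1 := congrFun h i
  rw [eps_apply, eps_apply, if_pos rfl, if_neg (fun hij => hne hij)] at h1
  exact one_ne_zero h1

lemma ww_inj : Function.Injective (ww (r := r)) := by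
  intro j j' h
  by_contra hne
  have h1 := congrFun h j
  rw [ww_apply, ww_apply, if_pos rfl, if_neg (fun hjj => hne hjj)] at h1
  exact one_ne_zero h1.symm

lemma exists_ne_ne (hr : 2 < r) (i j : Fin r) : ∃ k : Fin r, k ≠ i ∧ k ≠ j := by
  by_contra h
  push_neg at h
  have hsub : (Finset.univ : Finset (Fin r)) ⊆ {i, j} := by
    intro k _
    rcases eq_or_ne k i with h1 | h1
    · simp [h1]
    · simp [h k h1]
  have h2 : ({i, j} : Finset (Fin r)).card ≤ 2 := by
    apply (Finset.card_insert_le _ _).trans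
    simp
  have h3 := (Finset.card_le_card hsub).trans h2
  rw [Finset.card_univ, Fintype.card_fin] at h3
  omega

lemma eps_ne_ww (hr : 2 < r) (i j : Fin r) : eps i ≠ ww j := by
  obtain ⟨k, hki, hkj⟩ := exists_ne_ne hr i j
  intro h
  have h1 := congrFun h k
  rw [eps_apply, ww_apply, if_neg hki, if_neg hkj] at h1
  exact one_ne_zero h1.symm

lemma phi_inj (hr : 2 < r) : Function.Injective (phi r) := by
  rintro (i | i) (i' | i') h
  · rw [phi_inl, phi_inl] at h; rw [eps_inj h]
  · exact absurd h (eps_ne_ww hr i i')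
  · exact absurd h.symm (eps_ne_ww hr i' i)
  · rw [phi_inr, phi_inr] at h; rw [ww_inj h]

lemma sum_eps_apply (s : Finset (Fin r)) (k : Fin r) :
    (∑ i ∈ s, eps i) k = if k ∈ s then 1 else 0 := by
  rw [Finset.sum_apply]
  simp only [eps_apply]
  exact Finset.sum_ite_eq s k fun _ => 1

lemma sum_ww_apply (s : Finset (Fin r)) (k : Fin r) :
    (∑ j ∈ s, ww j) k = (s.card : ZMod 2) - (if k ∈ s then 1 else 0) := by
  rw [Finset.sum_apply]
  have h1 : ∀ j ∈ s, ww j k = 1 - (if k = j then 1 else 0) := by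
    intro j _
    rw [ww_apply]
    by_cases h : k = j <;> simp [h]
  rw [Finset.sum_congr rfl h1, Finset.sum_sub_distrib, Finset.sum_const,
    Finset.sum_ite_eq s k fun _ => 1]
  simp [nsmul_eq_mul]

lemma ww_eq_sum (z : Fin r) : ww z = ∑ i ∈ Finset.univ.erase z, eps i := by
  funext k
  rw [sum_eps_apply, ww_apply]
  by_cases h : k = z <;> simp [h, Finset.mem_erase]

lemma eps_eq_sum (hr : 2 < r) (hev : Even r) (z : Fin r) :
    eps z = ∑ j ∈ Finset.univ.erase z, ww j := by
  have hcast : ((r : ℕ) : ZMod 2) = 0 :=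
    (ZMod.natCast_eq_zero_iff r 2).mpr hev.two_dvd
  have hr1 : (((r : ℕ) - 1 : ℕ) : ZMod 2) = 1 := by
    rw [Nat.cast_sub (by omega), hcast, Nat.cast_one, zero_sub]
    decide
  funext k
  rw [sum_ww_apply, eps_apply, Finset.card_erase_of_mem (Finset.mem_univ z),
    Finset.card_univ, Fintype.card_fin]
  by_cases h : k = z
  · simp [h, hr1, Finset.mem_erase]
  · simp [h, hr1, Finset.mem_erase]

theorem linearIndependent_image {R M ι : Type*} [Semiring R] [AddCommMonoid M] [Module R M]
    {s : Set ι} {f : ι → M} (hf : Set.InjOn f s) :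
    (LinearIndependent R fun x : s => f x) ↔ LinearIndependent R fun x : f '' s => (x : M) :=
  linearIndepOn_iff_image hf

theorem linearIndependent_insert {K V : Type*} [DivisionRing K] [AddCommGroup V] [Module K V]
    {s : Set V} {x : V} (hxs : x ∉ s) :
    (LinearIndependent K fun b : (insert x s : Set V) => (b : V)) ↔
      (LinearIndependent K fun b : s => (b : V)) ∧ x ∉ Submodule.span K s :=
  linearIndepOn_id_insert hxs

lemma li_eps (S : Set (Fin r)) :
    LinearIndependent (ZMod 2)
      (fun x : (eps '' S : Set (Fin r → ZMod 2)) => (x : Fin r → ZMod 2)) := by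
  have hb := (Pi.basisFun (ZMod 2) (Fin r)).linearIndependent
  have heq : (fun i : Fin r => eps i) = fun i => Pi.basisFun (ZMod 2) (Fin r) i := by
    funext i
    rw [Pi.basisFun_apply]
    rfl
  have hli : LinearIndependent (ZMod 2) (fun i : Fin r => eps i) := by rw [heq]; exact hb
  have hrange := (linearIndepOn_id_range_iff eps_inj).mpr hli
  exact hrange.mono (Set.image_subset_range _ _)

lemma li_ww_family (z : Fin r) :
    LinearIndependent (ZMod 2) (fun j : {j : Fin r // j ≠ z} => ww (j : Fin r)) := by
  classical
  rw [Fintype.linearIndependent_iff]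
  intro g hg j0
  set G : Fin r → ZMod 2 := fun j => if h : j ≠ z then g ⟨j, h⟩ else 0 with hG
  have hGg : ∀ j : {j : Fin r // j ≠ z}, G (j : Fin r) = g j := by
    intro j
    rw [hG]
    exact dif_pos j.2
  have hsum : ∀ k : Fin r, ∑ j ∈ Finset.univ.erase z, G j * ww j k = 0 := by
    intro k
    have h1 : ∑ j ∈ Finset.univ.erase z, G j * ww j k
        = ∑ j : {j : Fin r // j ≠ z}, G (j : Fin r) * ww (j : Fin r) k :=
      Finset.sum_subtype _ (by simp [Finset.mem_erase]) _
    have h2 := congrFun hg k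
    rw [Finset.sum_apply] at h2
    simp only [Pi.smul_apply, smul_eq_mul] at h2
    rw [h1, Finset.sum_congr rfl (fun j _ => by rw [hGg j])]
    exact h2
  have hz0 : ∑ j ∈ Finset.univ.erase z, G j = 0 := by
    have h0 : ∑ j ∈ Finset.univ.erase z, G j * ww j z
        = ∑ j ∈ Finset.univ.erase z, G j := by
      refine Finset.sum_congr rfl fun j hj => ?_
      rw [ww_apply, if_neg (fun h => (Finset.mem_erase.mp hj).1 h.symm), mul_one]
    rw [← h0]
    exact hsum z
  have hk := hsum (j0 : Fin r)
  have h1 : ∀ j ∈ Finset.univ.erase z,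
      G j * ww j (j0 : Fin r) = G j - (if (j0 : Fin r) = j then G j else 0) := by
    intro j _
    rw [ww_apply]
    by_cases h : (j0 : Fin r) = j <;> simp [h]
  rw [Finset.sum_congr rfl h1, Finset.sum_sub_distrib, hz0,
    Finset.sum_ite_eq _ (j0 : Fin r) G,
    if_pos (by simp [Finset.mem_erase, j0.2])] at hk
  rw [zero_sub, neg_eq_zero] at hk
  rw [← hGg j0]
  exact hk

lemma li_ww (z : Fin r) :
    LinearIndependent (ZMod 2)
      (fun x : (ww '' {j : Fin r | j ≠ z} : Set (Fin r → ZMod 2)) => (x : Fin r → ZMod 2)) := by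
  refine (linearIndependent_image (ww_inj.injOn)).mp ?_
  exact li_ww_family z

lemma not_mem_span (f : (Fin r → ZMod 2) →ₗ[ZMod 2] ZMod 2) {s : Set (Fin r → ZMod 2)}
    (hs : ∀ v ∈ s, f v = 0) {x : Fin r → ZMod 2} (hx : f x ≠ 0) :
    x ∉ Submodule.span (ZMod 2) s := by
  intro hmem
  have hle : Submodule.span (ZMod 2) s ≤ LinearMap.ker f :=
    Submodule.span_le.mpr fun v hv => LinearMap.mem_ker.mpr (hs v hv)
  exact hx (LinearMap.mem_ker.mp (hle hmem))

variable {M : Matroid (Fin r ⊕ Fin r)}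

lemma indep_iff (hr : 2 < r) (hM : IsVecMatroid M (phi r) Set.univ)
    {I : Set (Fin r ⊕ Fin r)} :
    M.Indep I ↔ LinearIndependent (ZMod 2)
      (fun x : (phi r '' I) => (x : Fin r → ZMod 2)) := by
  rw [hM.2 I (subset_univ I)]
  exact linearIndependent_image ((phi_inj hr).injOn)

lemma flat_of (hr : 2 < r) (hM : IsVecMatroid M (phi r) Set.univ)
    (H : Set (Fin r ⊕ Fin r)) (f : (Fin r → ZMod 2) →ₗ[ZMod 2] ZMod 2)
    (hf : ∀ a, f (phi r a) = 0 ↔ a ∈ H) : M.IsFlat H := by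
  refine ⟨fun I X hIH hIX => fun x hxX => ?_, by rw [hM.1]; exact subset_univ H⟩
  by_cases hxI : x ∈ I
  · exact hIH.subset hxI
  have hxcl : x ∈ M.closure I := hIX.subset_closure hxX
  rw [hIH.indep.mem_closure_iff] at hxcl
  rcases hxcl with hdep | hxI'
  · have hIi := (indep_iff hr hM).mp hIH.indep
    have hni : ¬ LinearIndependent (ZMod 2)
        (fun y : (phi r '' insert x I) => (y : Fin r → ZMod 2)) :=
      fun h => hdep.not_indep ((indep_iff hr hM).mpr h)
    rw [Set.image_insert_eq] at hni
    have hnotmem : phi r x ∉ phi r '' I := by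
      rintro ⟨y, hyI, hye⟩
      exact hxI (phi_inj hr hye ▸ hyI)
    rw [linearIndependent_insert hnotmem] at hni
    push_neg at hni
    have hx_span := hni hIi
    have hf0 : f (phi r x) = 0 := by
      have hle : Submodule.span (ZMod 2) (phi r '' I) ≤ LinearMap.ker f := by
        refine Submodule.span_le.mpr ?_
        rintro v ⟨a, haI, rfl⟩
        exact LinearMap.mem_ker.mpr ((hf a).mpr (hIH.subset haI))
      exact LinearMap.mem_ker.mp (hle hx_span)
    exact (hf x).mp hf0
  · exact hIH.subset hxI'

lemma hyperplane_of (hr : 2 < r) (hM : IsVecMatroid M (phi r) Set.univ)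
    (H : Set (Fin r ⊕ Fin r)) (f : (Fin r → ZMod 2) →ₗ[ZMod 2] ZMod 2)
    (hf : ∀ a, f (phi r a) = 0 ↔ a ∈ H)
    (a0 : Fin r ⊕ Fin r) (ha0 : a0 ∉ H)
    (I : Set (Fin r ⊕ Fin r)) (hIH : I ⊆ H) (hIi : M.Indep I)
    (hIcard : I.ncard = r - 1) : Hyperplane M H := by
  classical
  refine ⟨flat_of hr hM H f hf, ?_, ?_⟩
  · rw [hM.1]
    intro h
    exact ha0 (h ▸ Set.mem_univ a0)
  intro F hF hHF
  obtain ⟨e, heF, heH⟩ := exists_of_ssubset hHF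
  have heI : e ∉ I := fun h => heH (hIH h)
  have hBind : M.Indep (insert e I) := by
    rw [indep_iff hr hM, Set.image_insert_eq]
    have hnotmem : phi r e ∉ phi r '' I := by
      rintro ⟨y, hyI, hye⟩
      exact heI (phi_inj hr hye ▸ hyI)
    rw [linearIndependent_insert hnotmem]
    refine ⟨(indep_iff hr hM).mp hIi, not_mem_span f ?_ ?_⟩
    · rintro v ⟨a, haI, rfl⟩
      exact (hf a).mpr (hIH haI)
    · intro h0
      exact heH ((hf e).mp h0)
  have hsub : insert e I ⊆ F := Set.insert_subset heF (hIH.trans hHF.subset)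
  refine Subset.antisymm (hM.1 ▸ hF.subset_ground) fun g _ => ?_
  have h1 : g ∈ M.closure (insert e I) := by
    rw [hBind.mem_closure_iff]
    by_cases hgB : g ∈ insert e I
    · right; exact hgB
    left
    rw [Matroid.dep_iff]
    refine ⟨fun hind => ?_, by rw [hM.1]; exact subset_univ _⟩
    have hli := (indep_iff hr hM).mp hind
    have hcard := hli.fintype_card_le_finrank
    rw [Module.finrank_fintype_fun_eq_card, Fintype.card_fin] at hcard
    have hn : (phi r '' insert g (insert e I)).ncard = r + 1 := by
      rw [Set.ncard_image_of_injective _ (phi_inj hr),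
        Set.ncard_insert_of_notMem hgB, Set.ncard_insert_of_notMem heI, hIcard]
      omega
    rw [show Fintype.card (phi r '' insert g (insert e I))
        = (phi r '' insert g (insert e I)).ncard from by
      rw [← Nat.card_coe_set_eq, Nat.card_eq_fintype_card], hn] at hcard
    omega
  have h2 := M.closure_subset_closure hsub h1
  rwa [hF.closure] at h2

end SpikeAux

/-- in the rank-`r` tipless binary spike, the vector matroid of
`[I_r | J_r - I_r]` for even `r > 2`, the set `{e₂, …, e_{r+1}}` and its complement are
both circuit-hyperplanes.  Columns are indexed by `Fin r ⊕ Fin r`: `Sum.inl i` is the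
`i`-th column of `I_r` and `Sum.inr j` is the `j`-th column of `J_r - I_r`. -/
theorem spike_circuitHyperplanes (r : ℕ) (hr : 2 < r) (hev : Even r)
    (M : Matroid (Fin r ⊕ Fin r))
    (hM : IsVecMatroid M
      (Sum.elim (fun i => Pi.single i (1 : ZMod 2))
        (fun j => fun i => if i = j then (0 : ZMod 2) else 1)) Set.univ) :
    CircuitHyperplane M
        (insert (Sum.inr (⟨0, by omega⟩ : Fin r)) (Sum.inl '' {i : Fin r | i.val ≠ 0})) ∧
      CircuitHyperplane M
        (Set.univ \
          insert (Sum.inr (⟨0, by omega⟩ : Fin r)) (Sum.inl '' {i : Fin r | i.val ≠ 0})) := by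
  classical
  have hM' : IsVecMatroid M (phi r) Set.univ := hM
  set z : Fin r := ⟨0, by omega⟩ with hzdef
  set T : Set (Fin r) := {i : Fin r | i ≠ z} with hTdef
  have hS0 : {i : Fin r | i.val ≠ 0} = T := by
    ext i
    simp only [hTdef, Set.mem_setOf_eq]
    constructor
    · intro h he
      exact h (by rw [he])
    · intro h hv
      exact h (Fin.ext hv)
  rw [hS0]
  set H : Set (Fin r ⊕ Fin r) := insert (Sum.inr z) (Sum.inl '' T) with hHdef
  set H' : Set (Fin r ⊕ Fin r) := insert (Sum.inl z) (Sum.inr '' T) with hH'def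
  -- basic facts
  have hEuniv : M.E = Set.univ := hM'.1
  have himg_inl : ∀ S : Set (Fin r), phi r '' (Sum.inl '' S) = eps '' S := by
    intro S
    rw [← Set.image_comp]
    rfl
  have himg_inr : ∀ S : Set (Fin r), phi r '' (Sum.inr '' S) = ww '' S := by
    intro S
    rw [← Set.image_comp]
    rfl
  have hHinl : ∀ i : Fin r, Sum.inl i ∈ H ↔ i ≠ z := by
    intro i
    simp [hHdef, hTdef]
  have hHinr : ∀ j : Fin r, Sum.inr j ∈ H ↔ j = z := by
    intro j
    simp [hHdef, hTdef]
  have hH'inl : ∀ i : Fin r, Sum.inl i ∈ H' ↔ i = z := by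
    intro i
    simp [hH'def, hTdef]
  have hH'inr : ∀ j : Fin r, Sum.inr j ∈ H' ↔ j ≠ z := by
    intro j
    simp [hH'def, hTdef]
  have hcompl : Set.univ \ H = H' := by
    ext x
    rcases x with i | j
    · simp only [Set.mem_diff, Set.mem_univ, true_and]
      rw [hHinl i, hH'inl i, not_not]
    · simp only [Set.mem_diff, Set.mem_univ, true_and]
      rw [hHinr j, hH'inr j]
  have hTcard : T.ncard = r - 1 := by
    have hT : T = (Set.univ : Set (Fin r)) \ {z} := by
      ext i
      simp [hTdef]
    rw [hT, Set.ncard_diff_singleton_of_mem (Set.mem_univ z), Set.ncard_univ,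
      Nat.card_eq_fintype_card, Fintype.card_fin]
  have hsubuniv : ∀ X : Set (Fin r ⊕ Fin r), X ⊆ M.E := by
    intro X
    rw [hEuniv]
    exact Set.subset_univ X
  -- independence of the two "deleted" sets
  have hindep_inl : M.Indep (Sum.inl '' T) := by
    rw [indep_iff hr hM', himg_inl]
    exact li_eps T
  have hindep_inr : M.Indep (Sum.inr '' T) := by
    rw [indep_iff hr hM', himg_inr]
    exact li_ww z
  have hww_notmem : ∀ S : Set (Fin r), ww z ∉ eps '' S := by
    rintro S ⟨a, _, h⟩
    exact eps_ne_ww hr a z h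
  have heps_notmem : ∀ S : Set (Fin r), eps z ∉ ww '' S := by
    rintro S ⟨a, _, h⟩
    exact eps_ne_ww hr z a h.symm
  constructor
  · -- CircuitHyperplane M H
    constructor
    · -- Circuit M H
      constructor
      · -- M.Dep H
        rw [Matroid.dep_iff]
        refine ⟨fun hind => ?_, hsubuniv H⟩
        have hli := (indep_iff hr hM').mp hind
        rw [hHdef, Set.image_insert_eq, phi_inr, himg_inl] at hli
        rw [linearIndependent_insert (hww_notmem T)] at hli
        apply hli.2
        rw [ww_eq_sum z]
        refine Submodule.sum_mem _ fun i hi => Submodule.subset_span ⟨i, ?_, rfl⟩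
        exact (Finset.mem_erase.mp hi).1
      · -- minimality
        intro e he
        rw [hHdef] at he
        rcases he with he | ⟨i, hiT, rfl⟩
        · subst he
          have hA : H \ {Sum.inr z} = Sum.inl '' T := by
            rw [hHdef]
            exact Set.insert_diff_self_of_notMem (by simp)
          rw [hA]
          exact hindep_inl
        · have hB : H \ {Sum.inl i} = insert (Sum.inr z) (Sum.inl '' (T \ {i})) := by
            rw [hHdef, Set.insert_diff_of_notMem _ (by simp), ← Set.image_singleton,
              ← Set.image_diff Sum.inl_injective]
          rw [hB, indep_iff hr hM', Set.image_insert_eq, phi_inr, himg_inl,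
            linearIndependent_insert (hww_notmem _)]
          refine ⟨li_eps _, not_mem_span (LinearMap.proj i) ?_ ?_⟩
          · rintro v ⟨a, ⟨haT, hai⟩, rfl⟩
            rw [LinearMap.proj_apply, eps_apply, if_neg (fun h => hai (by simp [h.symm]))]
          · rw [LinearMap.proj_apply, ww_apply, if_neg hiT]
            exact one_ne_zero
    · -- Hyperplane M H
      refine hyperplane_of hr hM' H (LinearMap.proj z) ?_ (Sum.inl z)
        (fun h => ((hHinl z).mp h) rfl) (Sum.inl '' T) ?_ hindep_inl ?_
      · rintro (i | j)
        · rw [phi_inl, LinearMap.proj_apply, eps_apply, hHinl i]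
          by_cases h : z = i
          · rw [if_pos h]
            simp [h]
          · rw [if_neg h]
            simp [Ne.symm h]
        · rw [phi_inr, LinearMap.proj_apply, ww_apply, hHinr j]
          by_cases h : z = j
          · rw [if_pos h]
            simp [h.symm]
          · rw [if_neg h]
            simp [one_ne_zero, Ne.symm h]
      · rw [hHdef]
        exact Set.subset_insert _ _
      · rw [Set.ncard_image_of_injective _ Sum.inl_injective]
        exact hTcard
  · -- CircuitHyperplane M (univ \ H)
    rw [hcompl]
    have hcast : ((r : ℕ) : ZMod 2) = 0 :=
      (ZMod.natCast_eq_zero_iff r 2).mpr hev.two_dvd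
    have hr1 : (((r : ℕ) - 1 : ℕ) : ZMod 2) = 1 := by
      rw [Nat.cast_sub (by omega), hcast, Nat.cast_one, zero_sub]
      decide
    constructor
    · -- Circuit M H'
      constructor
      · rw [Matroid.dep_iff]
        refine ⟨fun hind => ?_, hsubuniv H'⟩
        have hli := (indep_iff hr hM').mp hind
        rw [hH'def, Set.image_insert_eq, phi_inl, himg_inr] at hli
        rw [linearIndependent_insert (heps_notmem T)] at hli
        apply hli.2
        rw [eps_eq_sum hr hev z]
        refine Submodule.sum_mem _ fun j hj => Submodule.subset_span ⟨j, ?_, rfl⟩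
        exact (Finset.mem_erase.mp hj).1
      · intro e he
        rw [hH'def] at he
        rcases he with he | ⟨j, hjT, rfl⟩
        · subst he
          have hA : H' \ {Sum.inl z} = Sum.inr '' T := by
            rw [hH'def]
            exact Set.insert_diff_self_of_notMem (by simp)
          rw [hA]
          exact hindep_inr
        · have hB : H' \ {Sum.inr j} = insert (Sum.inl z) (Sum.inr '' (T \ {j})) := by
            rw [hH'def, Set.insert_diff_of_notMem _ (by simp), ← Set.image_singleton,
              ← Set.image_diff Sum.inr_injective]
          rw [hB, indep_iff hr hM', Set.image_insert_eq, phi_inl, himg_inr,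
            linearIndependent_insert (heps_notmem _)]
          refine ⟨LinearIndepOn.mono (v := id) (li_ww z) (Set.image_mono (f := ww) Set.diff_subset),
            not_mem_span ((LinearMap.proj z : (Fin r → ZMod 2) →ₗ[ZMod 2] ZMod 2) + (LinearMap.proj j : (Fin r → ZMod 2) →ₗ[ZMod 2] ZMod 2)) ?_ ?_⟩
          · rintro v ⟨a, ⟨haT, haj⟩, rfl⟩
            rw [LinearMap.add_apply, LinearMap.proj_apply, LinearMap.proj_apply,
              ww_apply, ww_apply, if_neg (fun h : z = a => haT (by simp [← h])),
              if_neg (fun h : j = a => haj (by simp [← h]))]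
            decide
          · rw [LinearMap.add_apply, LinearMap.proj_apply, LinearMap.proj_apply,
              eps_apply, eps_apply, if_pos rfl, if_neg (fun h : j = z => hjT h)]
            simp
    · -- Hyperplane M H'
      set f : (Fin r → ZMod 2) →ₗ[ZMod 2] ZMod 2 :=
        ∑ i ∈ Finset.univ.erase z, LinearMap.proj i with hfdef
      have hfval : ∀ v : Fin r → ZMod 2, f v = ∑ i ∈ Finset.univ.erase z, v i := by
        intro v
        rw [hfdef, LinearMap.sum_apply]
        exact Finset.sum_congr rfl fun i _ => LinearMap.proj_apply i v
      refine hyperplane_of hr hM' H' f ?_ (Sum.inr z)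
        (fun h => ((hH'inr z).mp h) rfl) (Sum.inr '' T) ?_ hindep_inr ?_
      · rintro (i | j)
        · rw [phi_inl, hfval, hH'inl i]
          have : ∑ k ∈ Finset.univ.erase z, eps i k
              = if i ∈ Finset.univ.erase z then 1 else 0 := by
            simp only [eps_apply]
            exact Finset.sum_ite_eq' _ i fun _ => 1
          rw [this]
          by_cases h : i = z
          · simp [h, Finset.mem_erase]
          · simp [h, Finset.mem_erase, one_ne_zero]
        · rw [phi_inr, hfval, hH'inr j]
          have hsum : ∑ k ∈ Finset.univ.erase z, ww j k
              = ((Finset.univ.erase z).card : ZMod 2)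
                - (if j ∈ Finset.univ.erase z then 1 else 0) := by
            have h1 : ∀ k ∈ Finset.univ.erase z,
                ww j k = 1 - (if k = j then 1 else 0) := by
              intro k _
              rw [ww_apply]
              by_cases h : k = j <;> simp [h]
            rw [Finset.sum_congr rfl h1, Finset.sum_sub_distrib, Finset.sum_const,
              Finset.sum_ite_eq' _ j fun _ => 1]
            simp [nsmul_eq_mul]
          rw [hsum, Finset.card_erase_of_mem (Finset.mem_univ z), Finset.card_univ,
            Fintype.card_fin]
          by_cases h : j = z
          · simp only [h, Finset.mem_erase, ne_eq, not_true_eq_false, false_and, if_false,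
              sub_zero, hr1]
            simp [one_ne_zero]
          · simp only [Finset.mem_erase, ne_eq, h, not_false_eq_true, true_and,
              Finset.mem_univ, if_true, hr1]
            simp [h]
      · rw [hH'def]
        exact Set.subset_insert _ _
      · rw [Set.ncard_image_of_injective _ Sum.inr_injective]
        exact hTcard

end NearlyBinary
end

section
/- If M1 and M2 are connected matroids each with at least two elements, and p is an element of E(M1) ∩ E(M2) = {p} that is neither a loop nor coloop of either, then both M1 and M2 are minors of the 2-sum M1 ⊕_2 M2. -/
set_option autoImplicit false

open Set

universe u v

namespace NearlyBinary

variable {α : Type u} {β : Type v}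

section Aux

variable {M M₁ M₂ : Matroid α} {C X I J K : Set α} {p : α}

lemma exists_circuit_subset_of_dep (hX : M.Dep X) : ∃ C, C ⊆ X ∧ Circuit M C := by
  obtain ⟨I, hI⟩ := M.exists_isBasis X hX.subset_ground
  have hne : I ≠ X := fun h => hX.not_indep (h ▸ hI.indep)
  obtain ⟨e, heX, heI⟩ : ∃ e ∈ X, e ∉ I := by
    by_contra hcon; push_neg at hcon
    exact hne (hI.subset.antisymm hcon)
  have hecl : e ∈ M.closure I := hI.subset_closure heX
  set Js : Set (Set α) := {J | J ⊆ I ∧ e ∈ M.closure J} with hJs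
  have hJne : Js.Nonempty := ⟨I, subset_rfl, hecl⟩
  have hclJ : M.closure (⋂₀ Js) = ⋂ J ∈ Js, M.closure J :=
    hI.indep.closure_sInter_eq_biInter_closure_of_forall_subset hJne (fun J hJ => hJ.1)
  set J₀ := ⋂₀ Js with hJ₀
  have hJ₀I : J₀ ⊆ I := sInter_subset_of_mem (⟨subset_rfl, hecl⟩ : I ∈ Js)
  have heJ₀cl : e ∈ M.closure J₀ := by
    rw [hclJ, mem_iInter₂]; exact fun J hJ => hJ.2
  have heJ₀ : e ∉ J₀ := fun h => heI (hJ₀I h)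
  have hJ₀indep : M.Indep J₀ := hI.indep.subset hJ₀I
  refine ⟨insert e J₀, insert_subset heX (hJ₀I.trans hI.subset), ?_, ?_⟩
  · exact hJ₀indep.insert_dep_iff.2 ⟨heJ₀cl, heJ₀⟩
  · rintro x hx
    rcases eq_or_ne x e with rfl | hxe
    · rw [insert_diff_of_mem _ (mem_singleton x), diff_singleton_eq_self heJ₀]
      exact hJ₀indep
    have hxJ₀ : x ∈ J₀ := hx.resolve_left hxe
    rw [insert_diff_of_notMem _ (by simp [hxe.symm])]
    have hx' : M.Indep (insert e (J₀ \ {x})) := by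
      rw [(hJ₀indep.subset diff_subset).insert_indep_iff_of_notMem (fun h => heJ₀ h.1)]
      refine ⟨M.closure_subset_ground _ heJ₀cl, fun hecl' => ?_⟩
      have : J₀ ⊆ J₀ \ {x} := sInter_subset_of_mem ⟨diff_subset.trans hJ₀I, hecl'⟩
      exact (this hxJ₀).2 rfl
    exact hx'

lemma indep_iff_no_circuit (hX : X ⊆ M.E) :
    M.Indep X ↔ ∀ C, C ⊆ X → ¬ Circuit M C := by
  constructor
  · intro hI C hCX hC
    exact hC.1.not_indep (hI.subset hCX)
  · intro h
    by_contra hdep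
    obtain ⟨C, hCX, hC⟩ := exists_circuit_subset_of_dep ⟨hdep, hX⟩
    exact h C hCX hC

lemma con_indep_iff_s18 (hK : M.Indep K) :
    (con M K).Indep J ↔ J ⊆ M.E \ K ∧ M.Indep (J ∪ K) := by
  have hKE : K ⊆ M.E := hK.subset_ground
  rw [con, Matroid.dual_indep_iff_exists']
  simp only [Matroid.restrict_ground_eq]
  constructor
  · rintro ⟨hJE, B, hB, hJB⟩
    rw [Matroid.isBase_restrict_iff (M := M✶) (show M.E \ K ⊆ M✶.E from diff_subset)] at hB
    obtain ⟨D₁, hD₁, rfl⟩ := hB.exists_isBase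
    have hB₀ : M.IsBase (M.E \ D₁) := hD₁.compl_isBase_of_dual
    have hbas : M.IsBasis ((M.E \ D₁) ∩ K) K := by
      rw [hB₀.inter_isBasis_iff_compl_inter_isBasis_dual hKE]
      have hdd : M.E \ (M.E \ D₁) = D₁ :=
        diff_diff_cancel_left (show D₁ ⊆ M.E from hD₁.subset_ground)
      rw [hdd]
      exact hB
    have hKB₀ : K ⊆ M.E \ D₁ := by
      have := hK.eq_of_isBasis hbas
      rw [← this]; exact inter_subset_left
    have hJB₀ : J ⊆ M.E \ D₁ := by
      intro x hx
      refine ⟨(hJE hx).1, fun hxD => ?_⟩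
      exact hJB.le_bot ⟨hx, hxD, hJE hx⟩
    exact ⟨hJE, hB₀.indep.subset (union_subset hJB₀ hKB₀)⟩
  · rintro ⟨hJE, hJK⟩
    obtain ⟨B₀, hB₀, hsub⟩ := hJK.exists_isBase_superset
    have hbas : M✶.IsBasis ((M.E \ B₀) ∩ (M.E \ K)) (M.E \ K) := by
      rw [← hB₀.inter_isBasis_iff_compl_inter_isBasis_dual hKE]
      rw [inter_eq_self_of_subset_right ((subset_union_right).trans hsub)]
      exact hK.isBasis_self
    refine ⟨hJE, _, (Matroid.isBase_restrict_iff (M := M✶)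
      (show M.E \ K ⊆ M✶.E from diff_subset)).2 hbas, ?_⟩
    exact Disjoint.mono_right inter_subset_left
      (disjoint_sdiff_right.mono_left ((subset_union_left).trans hsub))

lemma twoSum_symm (h : IsTwoSum M₁ M₂ p M) : IsTwoSum M₂ M₁ p M := by
  obtain ⟨hE, a, b, c, d, hME, hC⟩ := h
  refine ⟨by rw [inter_comm]; exact hE, c, d, a, b, by rw [hME, union_comm], fun C => ?_⟩
  rw [hC C]
  constructor
  · rintro (h1 | h1 | ⟨C₁, C₂, h1, h2, p1, p2, rfl⟩)
    · exact Or.inr (Or.inl h1)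
    · exact Or.inl h1
    · exact Or.inr (Or.inr ⟨C₂, C₁, h2, h1, p2, p1, union_comm _ _⟩)
  · rintro (h1 | h1 | ⟨C₁, C₂, h1, h2, p1, p2, rfl⟩)
    · exact Or.inr (Or.inl h1)
    · exact Or.inl h1
    · exact Or.inr (Or.inr ⟨C₂, C₁, h2, h1, p2, p1, union_comm _ _⟩)

lemma twoSum_left_minor (h : IsTwoSum M₁ M₂ p M) :
    ∃ P, IsMinorOf P M ∧ Iso M₁ P := by
  classical
  obtain ⟨hE, hl₁, hc₁, hl₂, hc₂, hME, hCir⟩ := h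
  have hp : p ∈ M₁.E ∩ M₂.E := by rw [hE]; exact rfl
  have hd : ∀ x, x ∈ M₁.E → x ∈ M₂.E → x = p := by
    intro x h1 h2
    have hx : x ∈ M₁.E ∩ M₂.E := ⟨h1, h2⟩
    rwa [hE, mem_singleton_iff] at hx
  have hip1 : M₁.Indep {p} := by
    by_contra hcon; exact hl₁ ⟨hp.1, hcon⟩
  have hip2 : M₂.Indep {p} := by
    by_contra hcon; exact hl₂ ⟨hp.2, hcon⟩
  obtain ⟨B, hB, hpB⟩ : ∃ B, M₂.IsBase B ∧ p ∉ B := by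
    by_contra hcon; push_neg at hcon
    exact hc₂ ⟨hp.2, fun B hB => hcon B hB⟩
  obtain ⟨C₂, hC₂sub, hC₂⟩ := exists_circuit_subset_of_dep (hB.insert_dep ⟨hp.2, hpB⟩)
  have hpC₂ : p ∈ C₂ := by
    by_contra hcon
    have hsubB : C₂ ⊆ B := by
      intro x hx
      rcases hC₂sub hx with rfl | hxB
      · exact absurd hx hcon
      · exact hxB
    exact hC₂.1.not_indep (hB.indep.subset hsubB)
  have hC₂E : C₂ ⊆ M₂.E := hC₂.1.subset_ground
  obtain ⟨q, hqC₂, hqp⟩ : ∃ q ∈ C₂, q ≠ p := by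
    by_contra hcon; push_neg at hcon
    have hCp : C₂ = {p} :=
      subset_antisymm (fun x hx => hcon x hx) (singleton_subset_iff.2 hpC₂)
    exact hC₂.1.not_indep (hCp ▸ hip2)
  have hqE2 : q ∈ M₂.E := hC₂E hqC₂
  have hq1 : q ∉ M₁.E := fun hq => hqp (hd q hq hqE2)
  set K : Set α := C₂ \ {p, q} with hKdef
  set D : Set α := M₂.E \ C₂ with hDdef
  have hKE : K ⊆ M.E := by
    intro x hx
    rw [hME]
    exact ⟨Or.inr (hC₂E hx.1), fun hxp => hx.2 (Or.inl hxp)⟩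
  have hDE : D ⊆ M.E := by
    intro x hx
    rw [hME]
    refine ⟨Or.inr hx.1, ?_⟩
    rintro rfl; exact hx.2 hpC₂
  have hdisj : Disjoint K D := disjoint_left.2 fun x hx hx' => hx'.2 hx.1
  have hC2pE : C₂ \ {p} ⊆ M.E := by
    intro x hx
    rw [hME]
    exact ⟨Or.inr (hC₂E hx.1), hx.2⟩
  have hMind : M.Indep (C₂ \ {p}) := by
    rw [indep_iff_no_circuit hC2pE]
    intro C hsub hCc
    rcases (hCir C).1 hCc with ⟨hc, hpC⟩ | ⟨hc, hpC⟩ | ⟨C1, C2', hc1, hc2, hp1, hp2, rfl⟩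
    · have hcemp : C = ∅ := by
        ext x
        simp only [mem_empty_iff_false, iff_false]
        intro hx
        exact (hsub hx).2 (hd x (hc.1.subset_ground hx) (hC₂E (hsub hx).1))
      exact hc.1.not_indep (hcemp ▸ M₁.empty_indep)
    · exact hc.1.not_indep ((hC₂.2 p hpC₂).subset hsub)
    · have h1e : C1 ⊆ {p} := by
        intro x hx
        rcases eq_or_ne x p with rfl | hxp
        · exact rfl
        have hx' : x ∈ C₂ \ {p} := hsub (Or.inl ⟨hx, hxp⟩)
        exact absurd (hd x (hc1.1.subset_ground hx) (hC₂E hx'.1)) hxp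
      have hC1p : C1 = {p} := subset_antisymm h1e (singleton_subset_iff.2 hp1)
      exact hc1.1.not_indep (hC1p ▸ hip1)
  have hKindep : M.Indep K :=
    hMind.subset (diff_subset_diff_right (by simp))
  set N := del (con M K) D with hNdef
  have hNE : N.E = (M.E \ K) \ D := rfl
  have hgr : (M.E \ K) \ D = (M₁.E \ {p}) ∪ {q} := by
    ext x
    constructor
    · rintro ⟨⟨hxM, hxK⟩, hxD⟩
      rw [hME] at hxM
      obtain ⟨hx12, hxp⟩ := hxM
      rw [mem_singleton_iff] at hxp
      rcases hx12 with hx1 | hx2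
      · exact Or.inl ⟨hx1, hxp⟩
      · have hxC₂ : x ∈ C₂ := by
          by_contra hcon; exact hxD ⟨hx2, hcon⟩
        have hxpq : x ∈ ({p, q} : Set α) := by
          by_contra hcon; exact hxK ⟨hxC₂, hcon⟩
        have hxpq' : x = p ∨ x = q := by simpa using hxpq
        rcases hxpq' with h | h
        · exact absurd h hxp
        · exact Or.inr h
    · intro hx
      rcases hx with ⟨hx1, hxp⟩ | hxq
      · have hxp' : x ≠ p := hxp
        have hxE : x ∈ M.E := by rw [hME]; exact ⟨Or.inl hx1, hxp'⟩
        have hx2 : x ∉ M₂.E := fun h2 => hxp' (hd x hx1 h2)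
        exact ⟨⟨hxE, fun hK => hx2 (hC₂E hK.1)⟩, fun hD => hx2 hD.1⟩
      · have hyq : x = q := hxq
        subst hyq
        have hxE : x ∈ M.E := by rw [hME]; exact ⟨Or.inr hqE2, hqp⟩
        exact ⟨⟨hxE, fun hK => hK.2 (Or.inr rfl)⟩, fun hD => hD.2 hqC₂⟩
  have hNind : ∀ J, J ⊆ (M₁.E \ {p}) ∪ {q} → (N.Indep J ↔ M.Indep (J ∪ K)) := by
    intro J hJ
    have hJ' : J ⊆ (M.E \ K) \ D := by rw [hgr]; exact hJ
    rw [show N.Indep J ↔ ((con M K).Indep J ∧ J ⊆ (M.E \ K) \ D) from Iff.rfl,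
      con_indep_iff_s18 hKindep]
    constructor
    · rintro ⟨⟨-, hi⟩, -⟩; exact hi
    · intro hi; exact ⟨⟨hJ'.trans diff_subset, hi⟩, hJ'⟩
  have hmain : ∀ I, I ⊆ M₁.E →
      (M₁.Indep I ↔ N.Indep ((fun x => if x = p then q else x) '' I)) := by
    intro I hIE
    by_cases hpI : p ∈ I
    · have himg : (fun x => if x = p then q else x) '' I = (I \ {p}) ∪ {q} := by
        ext y; constructor
        · rintro ⟨x, hxI, rfl⟩
          rcases eq_or_ne x p with rfl | hxp
          · simp only [if_pos rfl]; exact Or.inr rfl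
          · simp only [if_neg hxp]; exact Or.inl ⟨hxI, hxp⟩
        · rintro (⟨hyI, hyp⟩ | hy)
          · exact ⟨y, hyI, if_neg (fun hc => hyp hc)⟩
          · have hyq : y = q := hy
            exact ⟨p, hpI, by simp [hyq]⟩
      rw [himg]
      have hsubN : (I \ {p}) ∪ {q} ⊆ (M₁.E \ {p}) ∪ {q} :=
        union_subset_union_left _ (diff_subset_diff_left hIE)
      rw [hNind _ hsubN]
      have hqK : ({q} : Set α) ∪ K = C₂ \ {p} := by
        ext x; constructor
        · rintro (hx | hx)
          · have hxq : x = q := hx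
            subst hxq
            exact ⟨hqC₂, hqp⟩
          · exact ⟨hx.1, fun hc => hx.2 (Or.inl hc)⟩
        · rintro ⟨hx, hxp⟩
          rcases eq_or_ne x q with rfl | hxq
          · exact Or.inl rfl
          · refine Or.inr ⟨hx, ?_⟩
            rintro (hc | hc)
            · exact hxp hc
            · exact hxq hc
      rw [union_assoc, hqK]
      have htE : (I \ {p}) ∪ (C₂ \ {p}) ⊆ M.E := by
        apply union_subset
        · intro x hx; rw [hME]
          exact ⟨Or.inl (hIE hx.1), hx.2⟩
        · exact hC2pE
      constructor
      · intro hIind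
        rw [indep_iff_no_circuit htE]
        intro C hsub hCc
        rcases (hCir C).1 hCc with ⟨hc, hpC⟩ | ⟨hc, hpC⟩ | ⟨C1, C2', hc1, hc2, hp1, hp2, rfl⟩
        · have hCI : C ⊆ I := by
            intro x hx
            rcases hsub hx with hxx | hxx
            · exact hxx.1
            · exact absurd (hd x (hc.1.subset_ground hx) (hC₂E hxx.1)) hxx.2
          exact hc.1.not_indep (hIind.subset hCI)
        · have hCsub : C ⊆ C₂ \ {p} := by
            intro x hx
            rcases hsub hx with hxx | hxx
            · exact absurd (hd x (hIE hxx.1) (hc.1.subset_ground hx)) hxx.2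
            · exact hxx
          exact hc.1.not_indep ((hC₂.2 p hpC₂).subset hCsub)
        · have hC1I : C1 ⊆ I := by
            intro x hx
            rcases eq_or_ne x p with rfl | hxp
            · exact hpI
            have hx' := hsub (Or.inl ⟨hx, hxp⟩)
            rcases hx' with hxx | hxx
            · exact hxx.1
            · exact absurd (hd x (hc1.1.subset_ground hx) (hC₂E hxx.1)) hxp
          exact hc1.1.not_indep (hIind.subset hC1I)
      · intro hMind2
        rw [indep_iff_no_circuit hIE]
        intro C hsub hCc
        by_cases hpC : p ∈ C
        · have hcm : Circuit M ((C \ {p}) ∪ (C₂ \ {p})) :=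
            (hCir _).2 (Or.inr (Or.inr ⟨C, C₂, hCc, hC₂, hpC, hpC₂, rfl⟩))
          exact hcm.1.not_indep
            (hMind2.subset (union_subset_union_left _ (diff_subset_diff_left hsub)))
        · have hcm : Circuit M C := (hCir _).2 (Or.inl ⟨hCc, hpC⟩)
          have hCsub : C ⊆ (I \ {p}) ∪ (C₂ \ {p}) := fun x hx =>
            Or.inl ⟨hsub hx, fun hc => hpC (show p ∈ C from (show x = p from hc) ▸ hx)⟩
          exact hcm.1.not_indep (hMind2.subset hCsub)
    · have himg : (fun x => if x = p then q else x) '' I = I := by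
        ext y; constructor
        · rintro ⟨x, hxI, rfl⟩
          simp only [if_neg (fun hc => hpI ((show x = p from hc) ▸ hxI))]
          exact hxI
        · intro hy
          exact ⟨y, hy, if_neg (fun hc => hpI ((show y = p from hc) ▸ hy))⟩
      rw [himg]
      have hsubN : I ⊆ (M₁.E \ {p}) ∪ {q} := fun x hx =>
        Or.inl ⟨hIE hx, fun hc => hpI ((show x = p from hc) ▸ hx)⟩
      rw [hNind _ hsubN]
      have htE : I ∪ K ⊆ M.E := by
        apply union_subset
        · intro x hx; rw [hME]
          exact ⟨Or.inl (hIE hx), fun hc => hpI ((show x = p from hc) ▸ hx)⟩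
        · exact hKE
      constructor
      · intro hIind
        rw [indep_iff_no_circuit htE]
        intro C hsub hCc
        rcases (hCir C).1 hCc with ⟨hc, hpC⟩ | ⟨hc, hpC⟩ | ⟨C1, C2', hc1, hc2, hp1, hp2, rfl⟩
        · have hCI : C ⊆ I := by
            intro x hx
            rcases hsub hx with hxx | hxx
            · exact hxx
            · exact absurd (hd x (hc.1.subset_ground hx) (hC₂E hxx.1))
                (fun he => hxx.2 (Or.inl he))
          exact hc.1.not_indep (hIind.subset hCI)
        · have hCK : C ⊆ C₂ \ {p} := by
            intro x hx
            rcases hsub hx with hxx | hxx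
            · exact absurd (hd x (hIE hxx) (hc.1.subset_ground hx))
                (fun he => hpC ((show x = p from he) ▸ hx))
            · exact ⟨hxx.1, fun he => hxx.2 (Or.inl he)⟩
          exact hc.1.not_indep ((hC₂.2 p hpC₂).subset hCK)
        · have h2 : C2' ⊆ C₂ \ {q} := by
            intro x hx
            rcases eq_or_ne x p with rfl | hxp
            · exact ⟨hpC₂, fun he => hqp ((show x = q from he).symm)⟩
            · have hx' := hsub (Or.inr ⟨hx, hxp⟩)
              rcases hx' with hxx | hxx
              · exact absurd (hd x (hIE hxx) (hc2.1.subset_ground hx)) hxp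
              · exact ⟨hxx.1, fun he => hxx.2 (Or.inr he)⟩
          exact hc2.1.not_indep ((hC₂.2 q hqC₂).subset h2)
      · intro hMind2
        rw [indep_iff_no_circuit hIE]
        intro C hsub hCc
        have hpC : p ∉ C := fun hc => hpI (hsub hc)
        have hcm : Circuit M C := (hCir _).2 (Or.inl ⟨hCc, hpC⟩)
        exact hcm.1.not_indep (hMind2.subset (hsub.trans subset_union_left))
  refine ⟨N, ⟨K, D, hKE, hDE, hdisj, rfl⟩, ?_⟩
  refine ⟨fun x => if x = p then q else x, ?_, fun I hI => hmain I hI⟩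
  have hNE' : N.E = (M₁.E \ {p}) ∪ {q} := by rw [hNE, hgr]
  rw [hNE']
  refine ⟨?_, ?_, ?_⟩
  · intro x hx
    rcases eq_or_ne x p with rfl | hxp
    · simp only [if_pos rfl]; exact Or.inr rfl
    · simp only [if_neg hxp]; exact Or.inl ⟨hx, hxp⟩
  · intro x hx y hy hxy
    rcases eq_or_ne x p with hxp | hxp <;> rcases eq_or_ne y p with hyp | hyp
    · rw [hxp, hyp]
    · simp only [if_pos hxp, if_neg hyp] at hxy
      rw [← hxy] at hy; exact absurd hy hq1
    · simp only [if_neg hxp, if_pos hyp] at hxy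
      rw [hxy] at hx; exact absurd hx hq1
    · simp only [if_neg hxp, if_neg hyp] at hxy
      exact hxy
  · intro y hy
    rcases hy with ⟨hy1, hyp⟩ | hyq
    · exact ⟨y, hy1, if_neg (fun hc => hyp hc)⟩
    · have hyq' : y = q := hyq
      exact ⟨p, hp.1, by simp [hyq']⟩

end Aux

/-- both parts of a 2-sum of connected matroids, each with at least two
elements, are minors of the 2-sum (up to isomorphism). -/
theorem twoSum_parts_minors {α : Type u} (M₁ M₂ M : Matroid α) (p : α)
    (h : IsTwoSum M₁ M₂ p M)
    (h₁ : Connected M₁) (h₂ : Connected M₂)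
    (he₁ : 2 ≤ M₁.E.encard) (he₂ : 2 ≤ M₂.E.encard) :
    (∃ P, IsMinorOf P M ∧ Iso M₁ P) ∧ (∃ P, IsMinorOf P M ∧ Iso M₂ P) := by
  exact ⟨twoSum_left_minor h, twoSum_left_minor (twoSum_symm h)⟩

end NearlyBinary
end
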